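/- arXiv:2510.10571 — 5 statements merged into one kernel-verified Lean document; each statement's English description precedes it below -/
import Mathlib

section
/- Let μ, λ, s, L > 0 and d₁, d₂ ∈ [−1, 0) be real numbers such that s·L ≤ 1 and √(s² + λ)·L ≤ (π/3)·√μ. Then ∫_0^L e^{μ^{-1/2} s d₁ x} · cos(μ^{-1/2} √(s² + λ) d₂ x) dx ≥ (1/2)·e^{μ^{-1/2} d₁}·L. Equivalently, the real part of ∫_0^L exp(μ^{-1/2}(s d₁ + i√(s² + λ) d₂)x) dx is at least (1/2) e^{μ^{-1/2} d₁} L. -/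
noncomputable section

/-- **Lower bound for the oscillatory CGO integral (core of estimate (3.40)).**
For `μ, λ, s, L > 0`, `d₁, d₂ ∈ [−1, 0)` with `s L ≤ 1` and `√(s²+λ) L ≤ (π/3) √μ`,
the real part of `∫_0^L exp(μ^{-1/2}(s d₁ + i √(s²+λ) d₂) x) dx`, i.e.
`∫_0^L e^{μ^{-1/2} s d₁ x} cos(μ^{-1/2} √(s²+λ) d₂ x) dx`, is at least
`(1/2) e^{μ^{-1/2} d₁} L`. -/
theorem cgo_integral_lower_bound
    (μ lam s L d₁ d₂ : ℝ)
    (hμ : 0 < μ) (hlam : 0 < lam) (hs : 0 < s) (hL : 0 < L)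
    (hd₁ : d₁ ∈ Set.Ico (-1 : ℝ) 0) (hd₂ : d₂ ∈ Set.Ico (-1 : ℝ) 0)
    (hsL : s * L ≤ 1)
    (hosc : Real.sqrt (s ^ 2 + lam) * L ≤ (Real.pi / 3) * Real.sqrt μ) :
    (1 / 2) * Real.exp ((Real.sqrt μ)⁻¹ * d₁) * L ≤
      ∫ x in (0:ℝ)..L,
        Real.exp ((Real.sqrt μ)⁻¹ * s * d₁ * x) *
          Real.cos ((Real.sqrt μ)⁻¹ * Real.sqrt (s ^ 2 + lam) * d₂ * x) := by
  obtain ⟨hd₁l, hd₁u⟩ := hd₁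
  obtain ⟨hd₂l, hd₂u⟩ := hd₂
  have hμs : 0 < Real.sqrt μ := Real.sqrt_pos.mpr hμ
  have hμi : 0 < (Real.sqrt μ)⁻¹ := inv_pos.mpr hμs
  have hsl : 0 < Real.sqrt (s ^ 2 + lam) := Real.sqrt_pos.mpr (by positivity)
  set c : ℝ := (1 / 2) * Real.exp ((Real.sqrt μ)⁻¹ * d₁) with hc
  have key : ∀ x ∈ Set.Icc (0:ℝ) L,
      c ≤ Real.exp ((Real.sqrt μ)⁻¹ * s * d₁ * x) *
          Real.cos ((Real.sqrt μ)⁻¹ * Real.sqrt (s ^ 2 + lam) * d₂ * x) := by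
    intro x hx
    obtain ⟨hx0, hxL⟩ := hx
    have hsx : s * x ≤ 1 := le_trans (by nlinarith) hsL
    have hexp : Real.exp ((Real.sqrt μ)⁻¹ * d₁) ≤
        Real.exp ((Real.sqrt μ)⁻¹ * s * d₁ * x) := by
      apply Real.exp_le_exp.mpr
      have : d₁ ≤ s * d₁ * x := by nlinarith
      calc (Real.sqrt μ)⁻¹ * d₁ ≤ (Real.sqrt μ)⁻¹ * (s * d₁ * x) := by
            exact mul_le_mul_of_nonneg_left this hμi.le
        _ = (Real.sqrt μ)⁻¹ * s * d₁ * x := by ring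
    have hcos : (1 / 2 : ℝ) ≤
        Real.cos ((Real.sqrt μ)⁻¹ * Real.sqrt (s ^ 2 + lam) * d₂ * x) := by
      set t := (Real.sqrt μ)⁻¹ * Real.sqrt (s ^ 2 + lam) * d₂ * x with ht
      have ht0 : t ≤ 0 := by
        have : (Real.sqrt μ)⁻¹ * Real.sqrt (s ^ 2 + lam) * d₂ ≤ 0 := by
          apply mul_nonpos_of_nonneg_of_nonpos (by positivity) hd₂u.le
        nlinarith
      have hbound : -t ≤ Real.pi / 3 := by
        have h1 : Real.sqrt (s ^ 2 + lam) * x ≤ (Real.pi / 3) * Real.sqrt μ :=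
          le_trans (by nlinarith) hosc
        have h2 : -t = (Real.sqrt μ)⁻¹ * Real.sqrt (s ^ 2 + lam) * (-d₂) * x := by
          rw [ht]; ring
        have h3 : (Real.sqrt μ)⁻¹ * Real.sqrt (s ^ 2 + lam) * (-d₂) * x ≤
            (Real.sqrt μ)⁻¹ * (Real.sqrt (s ^ 2 + lam) * x) := by
          have hdx : -d₂ ≤ 1 := by linarith
          have hnn : 0 ≤ Real.sqrt (s ^ 2 + lam) * x := by positivity
          have : Real.sqrt (s ^ 2 + lam) * (-d₂) * x ≤ Real.sqrt (s ^ 2 + lam) * x := by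
            nlinarith
          calc (Real.sqrt μ)⁻¹ * Real.sqrt (s ^ 2 + lam) * (-d₂) * x
              = (Real.sqrt μ)⁻¹ * (Real.sqrt (s ^ 2 + lam) * (-d₂) * x) := by ring
            _ ≤ (Real.sqrt μ)⁻¹ * (Real.sqrt (s ^ 2 + lam) * x) :=
                mul_le_mul_of_nonneg_left this hμi.le
        have h4 : (Real.sqrt μ)⁻¹ * (Real.sqrt (s ^ 2 + lam) * x) ≤ Real.pi / 3 := by
          rw [inv_mul_le_iff₀ hμs]
          linarith [h1]
        linarith [h2 ▸ h3]
      have hpi3 : Real.pi / 3 ≤ Real.pi := by linarith [Real.pi_pos]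
      have := Real.cos_le_cos_of_nonneg_of_le_pi (by linarith : (0:ℝ) ≤ -t)
        hpi3 hbound
      rw [Real.cos_neg] at this
      rw [← Real.cos_pi_div_three]
      linarith [this]
    calc c = Real.exp ((Real.sqrt μ)⁻¹ * d₁) * (1/2) := by rw [hc]; ring
      _ ≤ Real.exp ((Real.sqrt μ)⁻¹ * s * d₁ * x) *
            Real.cos ((Real.sqrt μ)⁻¹ * Real.sqrt (s ^ 2 + lam) * d₂ * x) :=
          mul_le_mul hexp hcos (by norm_num) (Real.exp_pos _).le
  have hcont : Continuous fun x : ℝ =>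
      Real.exp ((Real.sqrt μ)⁻¹ * s * d₁ * x) *
        Real.cos ((Real.sqrt μ)⁻¹ * Real.sqrt (s ^ 2 + lam) * d₂ * x) := by
    fun_prop
  have hint : ∫ x in (0:ℝ)..L, c ≤ ∫ x in (0:ℝ)..L,
      Real.exp ((Real.sqrt μ)⁻¹ * s * d₁ * x) *
        Real.cos ((Real.sqrt μ)⁻¹ * Real.sqrt (s ^ 2 + lam) * d₂ * x) := by
    apply intervalIntegral.integral_mono_on hL.le
      intervalIntegrable_const (hcont.intervalIntegrable _ _)
    exact key
  have hconst : ∫ x in (0:ℝ)..L, c = c * L := by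
    rw [intervalIntegral.integral_const]; simp [mul_comm]
  calc (1 / 2) * Real.exp ((Real.sqrt μ)⁻¹ * d₁) * L = c * L := by rw [hc]
    _ = ∫ x in (0:ℝ)..L, c := hconst.symm
    _ ≤ _ := hint
end
end

section
/- Let L, b > 0, T₁ < T₂, μ, λ, s > 0, let d = (d₁, d₂) ∈ ℝ² be a unit vector, and let u₀ be the CGO function. Set R = (0, L) × (0, b). Let u, v : R̄ × [T₁, T₂] → ℂ be continuous, twice continuously differentiable in x and continuously differentiable in t on R̄ × [T₁, T₂]; let H : ℂ → ℂ be continuously real-differentiable; let F, G : R̄ × [T₁, T₂] → ℂ² be continuous and continuously differentiable in x; let f, g : R̄ × [T₁, T₂] → ℂ be continuous; and write w = u − v. Assume: (PDE) ∂ₜ(H(u(x,t)) − H(v(x,t))) − μΔw(x,t) = (f − g)(x,t) − div_x(F − G)(x,t) for all (x,t) ∈ R × (T₁, T₂); (BC) for all x₁ ∈ [0, L], t ∈ [T₁, T₂], on both horizontal edges x₂ = 0 and x₂ = b: w = 0 and ν·(F − G) = μ·ν·∇ₓw, where ν = (0, −1) on {x₂ = 0} and ν = (0, 1) on {x₂ =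 b}. Then I₁ + I₂ = I₃ + I₄ − I₅ − I₆, where I₁ = μ∫_{T₁}^{T₂}∫_0^b [(w ∂₁u₀ − u₀ ∂₁w)(L, x₂, t) − (w ∂₁u₀ − u₀ ∂₁w)(0, x₂, t)] dx₂ dt; I₂ = ∫_{T₁}^{T₂}∫_0^b [((F − G)₁·u₀)(L, x₂, t) − ((F − G)₁·u₀)(0, x₂, t)] dx₂ dt; I₃ = ∫_{T₁}^{T₂}∫_R (f − g)·u₀ dx dt; I₄ = ∫_{T₁}^{T₂}∫_R (F − G)·∇ₓu₀ dx dt; I₅ = ∫_R ([(H(u) − H(v))·u₀](x, T₂) − [(H(u) − H(v))·u₀](x, T₁)) dx; I₆ = λ∫_{T₁}^{T₂}∫_R (w − (H(u) − H(v)))·u₀ dx dt. -/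
noncomputable section

/-- Partial derivative in the first spatial variable. -/
def pd1 (f : ℝ → ℝ → ℝ → ℂ) (x₁ x₂ t : ℝ) : ℂ := deriv (fun y => f y x₂ t) x₁

/-- Partial derivative in the second spatial variable. -/
def pd2 (f : ℝ → ℝ → ℝ → ℂ) (x₁ x₂ t : ℝ) : ℂ := deriv (fun y => f x₁ y t) x₂

/-- Partial derivative in time. -/
def pdt (f : ℝ → ℝ → ℝ → ℂ) (x₁ x₂ t : ℝ) : ℂ := deriv (fun τ => f x₁ x₂ τ) t

/-- Spatial Laplacian `Δ = ∂₁² + ∂₂²`. -/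
def lap (f : ℝ → ℝ → ℝ → ℂ) (x₁ x₂ t : ℝ) : ℂ :=
  pd1 (pd1 f) x₁ x₂ t + pd2 (pd2 f) x₁ x₂ t

/-- The 2D complex geometric optics function
`u₀(x,t) = exp(μ^{-1/2}((s d₁ + i√(s²+λ) d₂) x₁ + (s d₂ − i√(s²+λ) d₁) x₂) + λ t)`. -/
def cgo2 (μ lam s d₁ d₂ : ℝ) (x₁ x₂ t : ℝ) : ℂ :=
  Complex.exp (((Real.sqrt μ : ℝ) : ℂ)⁻¹ *
      (((s : ℂ) * (d₁ : ℂ) + Complex.I * ((Real.sqrt (s ^ 2 + lam) : ℝ) : ℂ) * (d₂ : ℂ)) *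
          (x₁ : ℂ) +
        ((s : ℂ) * (d₂ : ℂ) - Complex.I * ((Real.sqrt (s ^ 2 + lam) : ℝ) : ℂ) * (d₁ : ℂ)) *
          (x₂ : ℂ)) +
    (lam : ℂ) * (t : ℂ))

/-- `w` is continuous on `S`, (jointly) continuously differentiable in `(x,t)`,
twice continuously differentiable in the space variables, with all the indicated
partial derivatives continuous on `S`. -/
structure SmoothC2x (w : ℝ → ℝ → ℝ → ℂ) (S : Set (ℝ × ℝ × ℝ)) : Prop where
  cont : ContinuousOn (fun p : ℝ × ℝ × ℝ => w p.1 p.2.1 p.2.2) S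
  jdiff : ∀ p ∈ S, DifferentiableAt ℝ (fun q : ℝ × ℝ × ℝ => w q.1 q.2.1 q.2.2) p
  d11 : ∀ p ∈ S, DifferentiableAt ℝ (fun y => pd1 w y p.2.1 p.2.2) p.1
  d22 : ∀ p ∈ S, DifferentiableAt ℝ (fun y => pd2 w p.1 y p.2.2) p.2.1
  cont1 : ContinuousOn (fun p : ℝ × ℝ × ℝ => pd1 w p.1 p.2.1 p.2.2) S
  cont2 : ContinuousOn (fun p : ℝ × ℝ × ℝ => pd2 w p.1 p.2.1 p.2.2) S
  contt : ContinuousOn (fun p : ℝ × ℝ × ℝ => pdt w p.1 p.2.1 p.2.2) S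
  cont11 : ContinuousOn (fun p : ℝ × ℝ × ℝ => pd1 (pd1 w) p.1 p.2.1 p.2.2) S
  cont22 : ContinuousOn (fun p : ℝ × ℝ × ℝ => pd2 (pd2 w) p.1 p.2.1 p.2.2) S

/-- `f` is continuous on `S` and continuously differentiable in the space variables. -/
structure SpaceC1x (f : ℝ → ℝ → ℝ → ℂ) (S : Set (ℝ × ℝ × ℝ)) : Prop where
  cont : ContinuousOn (fun p : ℝ × ℝ × ℝ => f p.1 p.2.1 p.2.2) S
  d1 : ∀ p ∈ S, DifferentiableAt ℝ (fun y => f y p.2.1 p.2.2) p.1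
  d2 : ∀ p ∈ S, DifferentiableAt ℝ (fun y => f p.1 y p.2.2) p.2.1
  cont1 : ContinuousOn (fun p : ℝ × ℝ × ℝ => pd1 f p.1 p.2.1 p.2.2) S
  cont2 : ContinuousOn (fun p : ℝ × ℝ × ℝ => pd2 f p.1 p.2.1 p.2.2) S

/-!
Write `W = u - v`, `Φ = H(u) - H(v)`, `P = F - G` and `U = u₀ = exp (α x₁ + β x₂ + λ t)`, where
`μ (α² + β²) = -λ`. Multiplying the PDE by `U` gives, in the open box,
`∂₁[μ (W ∂₁U - U ∂₁W) + P₁ U] + ∂₂[μ (W ∂₂U - U ∂₂W) + P₂ U] + ∂ₜ[Φ U]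
  = (f - g) U + P·∇U - λ (W - Φ) U`.
Integrate over the box and apply the fundamental theorem of calculus in the variable of each
derivative (after Fubini): the `x₁`-flux gives `I₁ + I₂`, the `x₂`-flux vanishes by the boundary
conditions, and the time derivative gives `I₅`.
-/

open MeasureTheory Set intervalIntegral

abbrev cuboid (a b c d e r : ℝ) : Set (ℝ × ℝ × ℝ) := Icc a b ×ˢ Icc c d ×ˢ Icc e r

section IteratedIntegral

variable {E : Type*} [NormedAddCommGroup E] {a b c d e r : ℝ}

theorem ContinuousOn.integrableOn_Ioc_prod_Ioc {g : ℝ × ℝ → E}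
    (hg : ContinuousOn g (Icc a b ×ˢ Icc c d)) : IntegrableOn g (Ioc a b ×ˢ Ioc c d) :=
  (hg.integrableOn_compact (isCompact_Icc.prod isCompact_Icc)).mono_set
    (prod_mono Ioc_subset_Icc_self Ioc_subset_Icc_self)

theorem ContinuousOn.integrableOn_Ioc_rotate {h : ℝ → ℝ → ℝ → E}
    (hh : ContinuousOn (fun p : ℝ × ℝ × ℝ => h p.1 p.2.1 p.2.2) (cuboid a b c d e r)) :
    IntegrableOn (fun q : ℝ × ℝ × ℝ => h q.2.1 q.2.2 q.1) (Ioc e r ×ˢ Ioc a b ×ˢ Ioc c d) :=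
  ((hh.comp (f := fun q : ℝ × ℝ × ℝ => (q.2.1, q.2.2, q.1)) (by fun_prop)
    fun _ hq => ⟨hq.2.1, hq.2.2, hq.1⟩).integrableOn_compact
      (isCompact_Icc.prod (isCompact_Icc.prod isCompact_Icc))).mono_set
    (prod_mono Ioc_subset_Icc_self (prod_mono Ioc_subset_Icc_self Ioc_subset_Icc_self))

variable [NormedSpace ℝ E]

theorem intervalIntegral_intervalIntegral_eq_setIntegral {g : ℝ → ℝ → E} (hab : a ≤ b)
    (hcd : c ≤ d) (hg : ContinuousOn (fun p : ℝ × ℝ => g p.1 p.2) (Icc a b ×ˢ Icc c d)) :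
    ∫ x in a..b, ∫ y in c..d, g x y = ∫ p in Ioc a b ×ˢ Ioc c d, g p.1 p.2 := by
  simp_rw [integral_of_le hab, integral_of_le hcd]
  exact (setIntegral_prod _ hg.integrableOn_Ioc_prod_Ioc).symm

theorem intervalIntegral₃_eq_setIntegral {h : ℝ → ℝ → ℝ → E} (hab : a ≤ b) (hcd : c ≤ d)
    (her : e ≤ r)
    (hh : ContinuousOn (fun p : ℝ × ℝ × ℝ => h p.1 p.2.1 p.2.2) (cuboid a b c d e r)) :
    ∫ t in e..r, ∫ x in a..b, ∫ y in c..d, h x y t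
      = ∫ q in Ioc e r ×ˢ Ioc a b ×ˢ Ioc c d, h q.2.1 q.2.2 q.1 := by
  rw [Measure.volume_eq_prod, setIntegral_prod _ hh.integrableOn_Ioc_rotate, integral_of_le her]
  refine setIntegral_congr_fun measurableSet_Ioc fun t ht => ?_
  exact intervalIntegral_intervalIntegral_eq_setIntegral hab hcd
    (hh.comp (f := fun p : ℝ × ℝ => (p.1, p.2, t)) (by fun_prop) fun p hp =>
      ⟨hp.1, hp.2, Ioc_subset_Icc_self ht⟩)

theorem intervalIntegral₃_add {h₁ h₂ : ℝ → ℝ → ℝ → E} (hab : a ≤ b) (hcd : c ≤ d) (her : e ≤ r)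
    (hh₁ : ContinuousOn (fun p : ℝ × ℝ × ℝ => h₁ p.1 p.2.1 p.2.2) (cuboid a b c d e r))
    (hh₂ : ContinuousOn (fun p : ℝ × ℝ × ℝ => h₂ p.1 p.2.1 p.2.2) (cuboid a b c d e r)) :
    ∫ t in e..r, ∫ x in a..b, ∫ y in c..d, (h₁ x y t + h₂ x y t)
      = (∫ t in e..r, ∫ x in a..b, ∫ y in c..d, h₁ x y t)
        + ∫ t in e..r, ∫ x in a..b, ∫ y in c..d, h₂ x y t := by
  rw [intervalIntegral₃_eq_setIntegral hab hcd her hh₁,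
    intervalIntegral₃_eq_setIntegral hab hcd her hh₂,
    intervalIntegral₃_eq_setIntegral (h := fun x y t => h₁ x y t + h₂ x y t) hab hcd her
      (hh₁.add hh₂)]
  exact MeasureTheory.integral_add hh₁.integrableOn_Ioc_rotate hh₂.integrableOn_Ioc_rotate

theorem intervalIntegral₃_congr_Ioo {h₁ h₂ : ℝ → ℝ → ℝ → E} (hab : a ≤ b) (hcd : c ≤ d)
    (her : e ≤ r) (h : ∀ x ∈ Ioo a b, ∀ y ∈ Ioo c d, ∀ t ∈ Ioo e r, h₁ x y t = h₂ x y t) :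
    ∫ t in e..r, ∫ x in a..b, ∫ y in c..d, h₁ x y t
      = ∫ t in e..r, ∫ x in a..b, ∫ y in c..d, h₂ x y t :=
  integral_congr_Ioo_of_le her fun t ht => integral_congr_Ioo_of_le hab fun x hx =>
    integral_congr_Ioo_of_le hcd fun y hy => h x hx y hy t ht

theorem intervalIntegral₃_swap {h : ℝ → ℝ → ℝ → E} (hab : a ≤ b) (hcd : c ≤ d) (her : e ≤ r)
    (hh : ContinuousOn (fun p : ℝ × ℝ × ℝ => h p.1 p.2.1 p.2.2) (cuboid a b c d e r)) :
    ∫ t in e..r, ∫ x in a..b, ∫ y in c..d, h x y t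
      = ∫ x in a..b, ∫ y in c..d, ∫ t in e..r, h x y t := by
  have hint : IntegrableOn (fun q : (ℝ × ℝ) × ℝ => h q.1.1 q.1.2 q.2)
      ((Ioc a b ×ˢ Ioc c d) ×ˢ Ioc e r) (volume.prod volume) :=
    ((hh.comp (f := fun q : (ℝ × ℝ) × ℝ => (q.1.1, q.1.2, q.2)) (by fun_prop)
      fun _ hq => ⟨hq.1.1, hq.1.2, hq.2⟩).integrableOn_compact
        ((isCompact_Icc.prod isCompact_Icc).prod isCompact_Icc)).mono_set
      (prod_mono (prod_mono Ioc_subset_Icc_self Ioc_subset_Icc_self) Ioc_subset_Icc_self)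
  have hinner : IntegrableOn (fun p : ℝ × ℝ => ∫ t in Ioc e r, h p.1 p.2 t)
      (Ioc a b ×ˢ Ioc c d) (volume.prod volume) := by
    rw [IntegrableOn, ← Measure.prod_restrict] at hint
    exact hint.integral_prod_left
  rw [intervalIntegral₃_eq_setIntegral hab hcd her hh, Measure.volume_eq_prod,
    ← setIntegral_prod_swap]
  simp only [Prod.fst_swap, Prod.snd_swap]
  rw [setIntegral_prod _ hint, Measure.volume_eq_prod, setIntegral_prod _ hinner]
  simp_rw [integral_of_le hab, integral_of_le hcd, integral_of_le her]

variable [CompleteSpace E]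

theorem intervalIntegral₃_eq_sub_of_hasDerivAt_fst {A A' : ℝ → ℝ → ℝ → E} (hab : a ≤ b)
    (hcd : c ≤ d) (her : e ≤ r)
    (hA : ContinuousOn (fun p : ℝ × ℝ × ℝ => A p.1 p.2.1 p.2.2) (cuboid a b c d e r))
    (hA' : ContinuousOn (fun p : ℝ × ℝ × ℝ => A' p.1 p.2.1 p.2.2) (cuboid a b c d e r))
    (hdA : ∀ x ∈ Ioo a b, ∀ y ∈ Icc c d, ∀ t ∈ Icc e r, HasDerivAt (A · y t) (A' x y t) x) :
    ∫ t in e..r, ∫ x in a..b, ∫ y in c..d, A' x y t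
      = ∫ t in e..r, ∫ y in c..d, (A b y t - A a y t) := by
  refine integral_congr fun t ht => ?_
  rw [uIcc_of_le her] at ht
  have hslice : ContinuousOn (fun p : ℝ × ℝ => A' p.1 p.2 t) (Icc a b ×ˢ Icc c d) :=
    hA'.comp (f := fun p : ℝ × ℝ => (p.1, p.2, t)) (by fun_prop) fun p hp => ⟨hp.1, hp.2, ht⟩
  rw [intervalIntegral_intervalIntegral_swap (by
    rw [uIoc_of_le hab, uIoc_of_le hcd]; exact hslice.integrableOn_Ioc_prod_Ioc)]
  refine integral_congr fun y hy => ?_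
  rw [uIcc_of_le hcd] at hy
  exact integral_eq_sub_of_hasDerivAt_of_le hab
    (hA.comp (f := fun x => (x, y, t)) (by fun_prop) fun x hx => ⟨hx, hy, ht⟩)
    (fun x hx => hdA x hx y hy t ht)
    (ContinuousOn.intervalIntegrable_of_Icc hab
      (hslice.comp (f := fun x => (x, y)) (by fun_prop) fun x hx => ⟨hx, hy⟩))

theorem intervalIntegral₃_eq_sub_of_hasDerivAt_snd {B B' : ℝ → ℝ → ℝ → E} (hab : a ≤ b)
    (hcd : c ≤ d) (her : e ≤ r)
    (hB : ContinuousOn (fun p : ℝ × ℝ × ℝ => B p.1 p.2.1 p.2.2) (cuboid a b c d e r))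
    (hB' : ContinuousOn (fun p : ℝ × ℝ × ℝ => B' p.1 p.2.1 p.2.2) (cuboid a b c d e r))
    (hdB : ∀ x ∈ Icc a b, ∀ y ∈ Ioo c d, ∀ t ∈ Icc e r, HasDerivAt (B x · t) (B' x y t) y) :
    ∫ t in e..r, ∫ x in a..b, ∫ y in c..d, B' x y t
      = ∫ t in e..r, ∫ x in a..b, (B x d t - B x c t) := by
  refine integral_congr fun t ht => integral_congr fun x hx => ?_
  rw [uIcc_of_le her] at ht
  rw [uIcc_of_le hab] at hx
  exact integral_eq_sub_of_hasDerivAt_of_le hcd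
    (hB.comp (f := fun y => (x, y, t)) (by fun_prop) fun y hy => ⟨hx, hy, ht⟩)
    (fun y hy => hdB x hx y hy t ht)
    (ContinuousOn.intervalIntegrable_of_Icc hcd
      (hB'.comp (f := fun y => (x, y, t)) (by fun_prop) fun y hy => ⟨hx, hy, ht⟩))

theorem intervalIntegral₃_eq_zero_of_hasDerivAt_snd {B B' : ℝ → ℝ → ℝ → E} (hab : a ≤ b)
    (hcd : c ≤ d) (her : e ≤ r)
    (hB : ContinuousOn (fun p : ℝ × ℝ × ℝ => B p.1 p.2.1 p.2.2) (cuboid a b c d e r))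
    (hB' : ContinuousOn (fun p : ℝ × ℝ × ℝ => B' p.1 p.2.1 p.2.2) (cuboid a b c d e r))
    (hdB : ∀ x ∈ Icc a b, ∀ y ∈ Ioo c d, ∀ t ∈ Icc e r, HasDerivAt (B x · t) (B' x y t) y)
    (hBcd : ∀ x ∈ Icc a b, ∀ t ∈ Icc e r, B x d t = B x c t) :
    ∫ t in e..r, ∫ x in a..b, ∫ y in c..d, B' x y t = 0 := by
  rw [intervalIntegral₃_eq_sub_of_hasDerivAt_snd hab hcd her hB hB' hdB]
  calc _ = ∫ t in e..r, ∫ x in a..b, (0 : E) :=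
        integral_congr fun t ht => integral_congr fun x hx =>
          sub_eq_zero.2 (hBcd x (uIcc_of_le hab ▸ hx) t (uIcc_of_le her ▸ ht))
    _ = 0 := by simp

theorem intervalIntegral₃_eq_sub_of_hasDerivAt_thd {C C' : ℝ → ℝ → ℝ → E} (hab : a ≤ b)
    (hcd : c ≤ d) (her : e ≤ r)
    (hC : ContinuousOn (fun p : ℝ × ℝ × ℝ => C p.1 p.2.1 p.2.2) (cuboid a b c d e r))
    (hC' : ContinuousOn (fun p : ℝ × ℝ × ℝ => C' p.1 p.2.1 p.2.2) (cuboid a b c d e r))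
    (hdC : ∀ x ∈ Icc a b, ∀ y ∈ Icc c d, ∀ t ∈ Ioo e r, HasDerivAt (C x y ·) (C' x y t) t) :
    ∫ t in e..r, ∫ x in a..b, ∫ y in c..d, C' x y t
      = ∫ x in a..b, ∫ y in c..d, (C x y r - C x y e) := by
  rw [intervalIntegral₃_swap hab hcd her hC']
  refine integral_congr fun x hx => integral_congr fun y hy => ?_
  rw [uIcc_of_le hab] at hx
  rw [uIcc_of_le hcd] at hy
  exact integral_eq_sub_of_hasDerivAt_of_le her
    (hC.comp (f := fun t => (x, y, t)) (by fun_prop) fun t ht => ⟨hx, hy, ht⟩)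
    (fun t ht => hdC x hx y hy t ht)
    (ContinuousOn.intervalIntegrable_of_Icc her
      (hC'.comp (f := fun t => (x, y, t)) (by fun_prop) fun t ht => ⟨hx, hy, ht⟩))

end IteratedIntegral

section Regularity

variable {S : Set (ℝ × ℝ × ℝ)} {f g u v : ℝ → ℝ → ℝ → ℂ} {x y t : ℝ}

theorem SpaceC1x.hasDerivAt_fst (hf : SpaceC1x f S) (hp : (x, y, t) ∈ S) :
    HasDerivAt (f · y t) (pd1 f x y t) x :=
  (hf.d1 _ hp).hasDerivAt

theorem SpaceC1x.hasDerivAt_snd (hf : SpaceC1x f S) (hp : (x, y, t) ∈ S) :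
    HasDerivAt (f x · t) (pd2 f x y t) y :=
  (hf.d2 _ hp).hasDerivAt

theorem SpaceC1x.pd1_sub (hf : SpaceC1x f S) (hg : SpaceC1x g S) (hp : (x, y, t) ∈ S) :
    pd1 (fun x y t => f x y t - g x y t) x y t = pd1 f x y t - pd1 g x y t :=
  ((hf.hasDerivAt_fst hp).sub (hg.hasDerivAt_fst hp)).deriv

theorem SpaceC1x.pd2_sub (hf : SpaceC1x f S) (hg : SpaceC1x g S) (hp : (x, y, t) ∈ S) :
    pd2 (fun x y t => f x y t - g x y t) x y t = pd2 f x y t - pd2 g x y t :=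
  ((hf.hasDerivAt_snd hp).sub (hg.hasDerivAt_snd hp)).deriv

theorem SpaceC1x.sub (hf : SpaceC1x f S) (hg : SpaceC1x g S) :
    SpaceC1x (fun x y t => f x y t - g x y t) S where
  cont := hf.cont.sub hg.cont
  d1 p hp := (hf.d1 p hp).sub (hg.d1 p hp)
  d2 p hp := (hf.d2 p hp).sub (hg.d2 p hp)
  cont1 := (hf.cont1.sub hg.cont1).congr fun _ hp => hf.pd1_sub hg hp
  cont2 := (hf.cont2.sub hg.cont2).congr fun _ hp => hf.pd2_sub hg hp

theorem SmoothC2x.spaceC1x (hu : SmoothC2x u S) : SpaceC1x u S where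
  cont := hu.cont
  d1 p hp := by
    have h := (hu.jdiff p hp).comp p.1 (by fun_prop : DifferentiableAt ℝ (fun z => (z, p.2)) p.1)
    exact h
  d2 p hp := by
    have h := (hu.jdiff p hp).comp p.2.1
      (by fun_prop : DifferentiableAt ℝ (fun z => (p.1, z, p.2.2)) p.2.1)
    exact h
  cont1 := hu.cont1
  cont2 := hu.cont2

theorem SmoothC2x.hasDerivAt_thd (hu : SmoothC2x u S) (hp : (x, y, t) ∈ S) :
    HasDerivAt (u x y ·) (pdt u x y t) t := by
  have h := (hu.jdiff _ hp).comp t (by fun_prop : DifferentiableAt ℝ (fun τ : ℝ => (x, y, τ)) t)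
  exact h.hasDerivAt

theorem SmoothC2x.hasDerivAt_comp_thd {H : ℂ → ℂ} (hH : DifferentiableAt ℝ H (u x y t))
    (hu : SmoothC2x u S) (hp : (x, y, t) ∈ S) :
    HasDerivAt (fun τ => H (u x y τ)) (fderiv ℝ H (u x y t) (pdt u x y t)) t :=
  hH.hasFDerivAt.comp_hasDerivAt t (hu.hasDerivAt_thd hp)

/-- `pd1 (u - v) = pd1 u - pd1 v` holds only on `S` (off `S` the derivatives are junk), hence the
neighbourhood hypothesis. -/
theorem SmoothC2x.hasDerivAt_pd1_sub (hu : SmoothC2x u S) (hv : SmoothC2x v S)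
    (hx : ∀ᶠ z in nhds x, (z, y, t) ∈ S) :
    HasDerivAt (pd1 (fun x y t => u x y t - v x y t) · y t)
      (pd1 (pd1 u) x y t - pd1 (pd1 v) x y t) x :=
  ((hu.d11 _ hx.self_of_nhds).hasDerivAt.sub (hv.d11 _ hx.self_of_nhds).hasDerivAt
    ).congr_of_eventuallyEq (hx.mono fun _ hz => hu.spaceC1x.pd1_sub hv.spaceC1x hz)

theorem SmoothC2x.hasDerivAt_pd2_sub (hu : SmoothC2x u S) (hv : SmoothC2x v S)
    (hy : ∀ᶠ z in nhds y, (x, z, t) ∈ S) :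
    HasDerivAt (pd2 (fun x y t => u x y t - v x y t) x · t)
      (pd2 (pd2 u) x y t - pd2 (pd2 v) x y t) y :=
  ((hu.d22 _ hy.self_of_nhds).hasDerivAt.sub (hv.d22 _ hy.self_of_nhds).hasDerivAt
    ).congr_of_eventuallyEq (hy.mono fun _ hz => hu.spaceC1x.pd2_sub hv.spaceC1x hz)

end Regularity

section PlaneWave

variable {α β γ : ℂ}

def planeWave (α β γ : ℂ) (x₁ x₂ t : ℝ) : ℂ := Complex.exp (α * x₁ + β * x₂ + γ * t)

theorem continuous_planeWave :
    Continuous (fun p : ℝ × ℝ × ℝ => planeWave α β γ p.1 p.2.1 p.2.2) := by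
  unfold planeWave; fun_prop

theorem hasDerivAt_planeWave_fst (x y t : ℝ) :
    HasDerivAt (planeWave α β γ · y t) (α * planeWave α β γ x y t) x := by
  have h := (((hasDerivAt_id x).ofReal_comp.const_mul α).add_const (β * y + γ * t)).cexp
  simpa [planeWave, add_assoc, mul_comm] using h

theorem hasDerivAt_planeWave_snd (x y t : ℝ) :
    HasDerivAt (planeWave α β γ x · t) (β * planeWave α β γ x y t) y := by
  have h := ((((hasDerivAt_id y).ofReal_comp.const_mul β).const_add (α * x)).add_const
    (γ * t)).cexp
  simpa [planeWave, mul_comm] using h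

theorem hasDerivAt_planeWave_thd (x y t : ℝ) :
    HasDerivAt (planeWave α β γ x y ·) (γ * planeWave α β γ x y t) t := by
  have h := (((hasDerivAt_id t).ofReal_comp.const_mul γ).const_add (α * x + β * y)).cexp
  simpa [planeWave, mul_comm] using h

theorem pd1_planeWave (x y t : ℝ) : pd1 (planeWave α β γ) x y t = α * planeWave α β γ x y t :=
  (hasDerivAt_planeWave_fst x y t).deriv

theorem pd2_planeWave (x y t : ℝ) : pd2 (planeWave α β γ) x y t = β * planeWave α β γ x y t :=
  (hasDerivAt_planeWave_snd x y t).deriv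

end PlaneWave

def cgoCoeff₁ (μ lam s d₁ d₂ : ℝ) : ℂ :=
  ((√μ : ℝ) : ℂ)⁻¹ * (s * d₁ + Complex.I * ((√(s ^ 2 + lam) : ℝ) : ℂ) * d₂)

def cgoCoeff₂ (μ lam s d₁ d₂ : ℝ) : ℂ :=
  ((√μ : ℝ) : ℂ)⁻¹ * (s * d₂ - Complex.I * ((√(s ^ 2 + lam) : ℝ) : ℂ) * d₁)

theorem cgo2_eq_planeWave (μ lam s d₁ d₂ : ℝ) :
    cgo2 μ lam s d₁ d₂ = planeWave (cgoCoeff₁ μ lam s d₁ d₂) (cgoCoeff₂ μ lam s d₁ d₂) lam := by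
  ext x y t
  simp only [cgo2, planeWave, cgoCoeff₁, cgoCoeff₂]
  ring_nf

/-- The dispersion relation making `u₀` a solution of `∂ₜu₀ + μ Δu₀ = 0`: with `ρ = √(s² + λ)`,
`(s d₁ + iρ d₂)² + (s d₂ - iρ d₁)² = (s² - ρ²) |d|² = -λ`. -/
theorem cgoCoeff_dispersion {μ lam d₁ d₂ : ℝ} (s : ℝ) (hμ : 0 < μ) (hlam : 0 ≤ lam)
    (hd : d₁ ^ 2 + d₂ ^ 2 = 1) :
    (μ : ℂ) * (cgoCoeff₁ μ lam s d₁ d₂ ^ 2 + cgoCoeff₂ μ lam s d₁ d₂ ^ 2) = -lam := by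
  have hρ : ((√(s ^ 2 + lam) : ℝ) : ℂ) ^ 2 = s ^ 2 + lam := by
    rw [← Complex.ofReal_pow, Real.sq_sqrt (by positivity)]; push_cast; ring
  have hμ' : ((√μ : ℝ) : ℂ) ^ 2 = μ := by
    rw [← Complex.ofReal_pow, Real.sq_sqrt hμ.le]
  have hμ0 : ((√μ : ℝ) : ℂ) ≠ 0 := by exact_mod_cast (Real.sqrt_pos.mpr hμ).ne'
  have hd' : (d₁ : ℂ) ^ 2 + (d₂ : ℂ) ^ 2 = 1 := by exact_mod_cast hd
  simp only [cgoCoeff₁, cgoCoeff₂]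
  rw [← hμ']
  field_simp
  linear_combination (s ^ 2 - ((√(s ^ 2 + lam) : ℝ) : ℂ) ^ 2) * hd' - hρ
    + ((√(s ^ 2 + lam) : ℝ) : ℂ) ^ 2 * (d₁ ^ 2 + d₂ ^ 2) * Complex.I_sq

theorem HasDerivAt.wronskian {𝔸 : Type*} [NormedCommRing 𝔸] [NormedAlgebra ℝ 𝔸]
    {w w' u u' : ℝ → 𝔸} {w'' u'' : 𝔸} {x : ℝ} (hw : HasDerivAt w (w' x) x)
    (hw' : HasDerivAt w' w'' x) (hu : HasDerivAt u (u' x) x) (hu' : HasDerivAt u' u'' x) :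
    HasDerivAt (fun z => w z * u' z - u z * w' z) (w x * u'' - u x * w'') x :=
  ((hw.mul hu').sub (hu.mul hw')).congr_deriv (by ring)

/-- The left side is the space-time divergence of the flux
`(μ (W ∂₁U - U ∂₁W) + P₁ U, μ (W ∂₂U - U ∂₂W) + P₂ U, Φ U)` for `U = exp (α x₁ + β x₂ + γ t)`;
it is the PDE multiplied by `U`, once the dispersion relation turns `μ W ΔU` into `-γ W U`. -/
theorem green_integrand_eq {μ α β γ W W₁₁ W₂₂ Φ Φₜ P₁ P₂ P₁₁ P₂₂ q U : ℂ}
    (hdisp : μ * (α ^ 2 + β ^ 2) = -γ) (hpde : Φₜ - μ * (W₁₁ + W₂₂) = q - (P₁₁ + P₂₂)) :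
    μ * (W * (α * (α * U)) - U * W₁₁) + (P₁₁ * U + P₁ * (α * U))
        + (μ * (W * (β * (β * U)) - U * W₂₂) + (P₂₂ * U + P₂ * (β * U)))
        + (Φₜ * U + Φ * (γ * U))
      = q * U + (P₁ * (α * U) + P₂ * (β * U)) + -γ * ((W - Φ) * U) := by
  linear_combination U * hpde + W * U * hdisp

/-- `W₁₁`, `W₂₂` are continuous representatives of `∂₁²W`, `∂₂²W`: for `W = u - v` the iterated
`pd1`/`pd2` are only known to be the right ones in the interior. -/
theorem green_identity_planeWave {a b c d e r μ : ℝ} {α β γ : ℂ} (hab : a ≤ b) (hcd : c ≤ d)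
    (her : e ≤ r) (hdisp : (μ : ℂ) * (α ^ 2 + β ^ 2) = -γ)
    {W W₁₁ W₂₂ Φ Φₜ P₁ P₂ q : ℝ → ℝ → ℝ → ℂ} (hW : SpaceC1x W (cuboid a b c d e r))
    (hW₁₁ : ContinuousOn (fun p : ℝ × ℝ × ℝ => W₁₁ p.1 p.2.1 p.2.2) (cuboid a b c d e r))
    (hW₂₂ : ContinuousOn (fun p : ℝ × ℝ × ℝ => W₂₂ p.1 p.2.1 p.2.2) (cuboid a b c d e r))
    (hdW₁₁ : ∀ x ∈ Ioo a b, ∀ y ∈ Icc c d, ∀ t ∈ Icc e r,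
      HasDerivAt (pd1 W · y t) (W₁₁ x y t) x)
    (hdW₂₂ : ∀ x ∈ Icc a b, ∀ y ∈ Ioo c d, ∀ t ∈ Icc e r,
      HasDerivAt (pd2 W x · t) (W₂₂ x y t) y)
    (hΦ : ContinuousOn (fun p : ℝ × ℝ × ℝ => Φ p.1 p.2.1 p.2.2) (cuboid a b c d e r))
    (hΦₜ : ContinuousOn (fun p : ℝ × ℝ × ℝ => Φₜ p.1 p.2.1 p.2.2) (cuboid a b c d e r))
    (hdΦ : ∀ x ∈ Icc a b, ∀ y ∈ Icc c d, ∀ t ∈ Ioo e r, HasDerivAt (Φ x y ·) (Φₜ x y t) t)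
    (hP₁ : SpaceC1x P₁ (cuboid a b c d e r)) (hP₂ : SpaceC1x P₂ (cuboid a b c d e r))
    (hq : ContinuousOn (fun p : ℝ × ℝ × ℝ => q p.1 p.2.1 p.2.2) (cuboid a b c d e r))
    (hPDE : ∀ x ∈ Ioo a b, ∀ y ∈ Ioo c d, ∀ t ∈ Ioo e r,
      pdt Φ x y t - μ * lap W x y t = q x y t - (pd1 P₁ x y t + pd2 P₂ x y t))
    (hBC : ∀ x ∈ Icc a b, ∀ t ∈ Icc e r, W x c t = 0 ∧ W x d t = 0 ∧
      -P₂ x c t = μ * -pd2 W x c t ∧ P₂ x d t = μ * pd2 W x d t) :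
    (μ * ∫ t in e..r, ∫ y in c..d,
        ((W b y t * pd1 (planeWave α β γ) b y t - planeWave α β γ b y t * pd1 W b y t)
          - (W a y t * pd1 (planeWave α β γ) a y t - planeWave α β γ a y t * pd1 W a y t)))
      + (∫ t in e..r, ∫ y in c..d,
        (P₁ b y t * planeWave α β γ b y t - P₁ a y t * planeWave α β γ a y t))
    = (∫ t in e..r, ∫ x in a..b, ∫ y in c..d, q x y t * planeWave α β γ x y t)
      + (∫ t in e..r, ∫ x in a..b, ∫ y in c..d,
          (P₁ x y t * pd1 (planeWave α β γ) x y t + P₂ x y t * pd2 (planeWave α β γ) x y t))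
      - (∫ x in a..b, ∫ y in c..d,
          (Φ x y r * planeWave α β γ x y r - Φ x y e * planeWave α β γ x y e))
      - (γ * ∫ t in e..r, ∫ x in a..b, ∫ y in c..d,
          (W x y t - Φ x y t) * planeWave α β γ x y t) := by
  simp only [pd1_planeWave, pd2_planeWave]
  set U := planeWave α β γ
  obtain ⟨hWc, -, -, hW₁c, hW₂c⟩ := id hW
  obtain ⟨hP₁c, -, -, hP₁₁c, -⟩ := id hP₁
  obtain ⟨hP₂c, -, -, -, hP₂₂c⟩ := id hP₂
  have hUc : ContinuousOn (fun p : ℝ × ℝ × ℝ => U p.1 p.2.1 p.2.2) (cuboid a b c d e r) :=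
    continuous_planeWave.continuousOn
  have hU₁ : ∀ x y t, HasDerivAt (U · y t) (α * U x y t) x := hasDerivAt_planeWave_fst
  have hU₂ : ∀ x y t, HasDerivAt (U x · t) (β * U x y t) y := hasDerivAt_planeWave_snd
  have hUₜ : ∀ x y t, HasDerivAt (U x y ·) (γ * U x y t) t := hasDerivAt_planeWave_thd
  have hwronskian₁ := intervalIntegral₃_eq_sub_of_hasDerivAt_fst hab hcd her
    (A := fun x y t => W x y t * (α * U x y t) - U x y t * pd1 W x y t) (by fun_prop)
    (by fun_prop) fun x hx y hy t ht =>
      (hW.hasDerivAt_fst ⟨Ioo_subset_Icc_self hx, hy, ht⟩).wronskian (hdW₁₁ x hx y hy t ht)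
        (hU₁ x y t) ((hU₁ x y t).const_mul α)
  have hflux₁ := intervalIntegral₃_eq_sub_of_hasDerivAt_fst hab hcd her
    (A := fun x y t => P₁ x y t * U x y t) (by fun_prop) (by fun_prop) fun x hx y hy t ht =>
      (hP₁.hasDerivAt_fst ⟨Ioo_subset_Icc_self hx, hy, ht⟩).mul (hU₁ x y t)
  have hflux₂ := intervalIntegral₃_eq_zero_of_hasDerivAt_snd hab hcd her
    (B := fun x y t => μ * (W x y t * (β * U x y t) - U x y t * pd2 W x y t) + P₂ x y t * U x y t)
    (by fun_prop) (by fun_prop)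
    (fun x hx y hy t ht =>
      (((hW.hasDerivAt_snd ⟨hx, Ioo_subset_Icc_self hy, ht⟩).wronskian (hdW₂₂ x hx y hy t ht)
        (hU₂ x y t) ((hU₂ x y t).const_mul β)).const_mul (μ : ℂ)).add
      ((hP₂.hasDerivAt_snd ⟨hx, Ioo_subset_Icc_self hy, ht⟩).mul (hU₂ x y t)))
    fun x hx t ht => by
      obtain ⟨hW_bot, hW_top, hP_bot, hP_top⟩ := hBC x hx t ht
      linear_combination (μ * β * U x d t) * hW_top - (μ * β * U x c t) * hW_bot
        + U x d t * hP_top + U x c t * hP_bot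
  have htime := intervalIntegral₃_eq_sub_of_hasDerivAt_thd hab hcd her
    (C := fun x y t => Φ x y t * U x y t) (by fun_prop) (by fun_prop) fun x hx y hy t ht =>
      (hdΦ x hx y hy t ht).mul (hUₜ x y t)
  have hpde : ∀ x ∈ Ioo a b, ∀ y ∈ Ioo c d, ∀ t ∈ Ioo e r,
      Φₜ x y t - μ * (W₁₁ x y t + W₂₂ x y t) = q x y t - (pd1 P₁ x y t + pd2 P₂ x y t) := by
    intro x hx y hy t ht
    rw [← (hdW₁₁ x hx y (Ioo_subset_Icc_self hy) t (Ioo_subset_Icc_self ht)).deriv,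
      ← (hdW₂₂ x (Ioo_subset_Icc_self hx) y hy t (Ioo_subset_Icc_self ht)).deriv,
      ← (hdΦ x (Ioo_subset_Icc_self hx) y (Ioo_subset_Icc_self hy) t ht).deriv]
    exact hPDE x hx y hy t ht
  have hsum := intervalIntegral₃_congr_Ioo hab hcd her fun x hx y hy t ht =>
    green_integrand_eq (W := W x y t) (Φ := Φ x y t) (P₁ := P₁ x y t) (P₂ := P₂ x y t)
      (U := U x y t) hdisp (hpde x hx y hy t ht)
  simp (disch := fun_prop) only [intervalIntegral₃_add hab hcd her,
    intervalIntegral.integral_const_mul] at hsum hflux₁ hflux₂ htime ⊢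
  linear_combination hsum - μ * hwronskian₁ - hflux₁ - hflux₂ - htime

theorem integral_identity_I1_6_general
    (L b T₁ T₂ μ lam s d₁ d₂ : ℝ)
    (hL : 0 < L) (hb : 0 < b) (hT : T₁ < T₂)
    (hμ : 0 < μ) (hlam : 0 < lam)
    (hd : d₁ ^ 2 + d₂ ^ 2 = 1)
    (u v w u₀ : ℝ → ℝ → ℝ → ℂ) (H : ℂ → ℂ)
    (F₁ F₂ G₁ G₂ f g : ℝ → ℝ → ℝ → ℂ)
    (hw : ∀ x₁ x₂ t, w x₁ x₂ t = u x₁ x₂ t - v x₁ x₂ t)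
    (hu₀ : u₀ = cgo2 μ lam s d₁ d₂)
    (hu : SmoothC2x u (Set.Icc (0:ℝ) L ×ˢ (Set.Icc (0:ℝ) b ×ˢ Set.Icc T₁ T₂)))
    (hv : SmoothC2x v (Set.Icc (0:ℝ) L ×ˢ (Set.Icc (0:ℝ) b ×ˢ Set.Icc T₁ T₂)))
    (hH : ∀ z, DifferentiableAt ℝ H z) (hH' : Continuous (fun z => fderiv ℝ H z))
    (hF₁ : SpaceC1x F₁ (Set.Icc (0:ℝ) L ×ˢ (Set.Icc (0:ℝ) b ×ˢ Set.Icc T₁ T₂)))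
    (hF₂ : SpaceC1x F₂ (Set.Icc (0:ℝ) L ×ˢ (Set.Icc (0:ℝ) b ×ˢ Set.Icc T₁ T₂)))
    (hG₁ : SpaceC1x G₁ (Set.Icc (0:ℝ) L ×ˢ (Set.Icc (0:ℝ) b ×ˢ Set.Icc T₁ T₂)))
    (hG₂ : SpaceC1x G₂ (Set.Icc (0:ℝ) L ×ˢ (Set.Icc (0:ℝ) b ×ˢ Set.Icc T₁ T₂)))
    (hf : ContinuousOn (fun p : ℝ × ℝ × ℝ => f p.1 p.2.1 p.2.2)
      (Set.Icc (0:ℝ) L ×ˢ (Set.Icc (0:ℝ) b ×ˢ Set.Icc T₁ T₂)))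
    (hg : ContinuousOn (fun p : ℝ × ℝ × ℝ => g p.1 p.2.1 p.2.2)
      (Set.Icc (0:ℝ) L ×ˢ (Set.Icc (0:ℝ) b ×ˢ Set.Icc T₁ T₂)))
    -- (PDE)
    (hPDE : ∀ x₁ ∈ Set.Ioo (0:ℝ) L, ∀ x₂ ∈ Set.Ioo (0:ℝ) b, ∀ t ∈ Set.Ioo T₁ T₂,
      pdt (fun a b' c => H (u a b' c) - H (v a b' c)) x₁ x₂ t
          - (μ : ℂ) * lap w x₁ x₂ t
        = (f x₁ x₂ t - g x₁ x₂ t)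
          - (pd1 (fun a b' c => F₁ a b' c - G₁ a b' c) x₁ x₂ t
            + pd2 (fun a b' c => F₂ a b' c - G₂ a b' c) x₁ x₂ t))
    -- (BC) on both horizontal edges: `w = 0` and `ν·(F − G) = μ ν·∇ₓ w`
    (hBC : ∀ x₁ ∈ Set.Icc (0:ℝ) L, ∀ t ∈ Set.Icc T₁ T₂,
      w x₁ 0 t = 0 ∧ w x₁ b t = 0 ∧
      -(F₂ x₁ 0 t - G₂ x₁ 0 t) = (μ : ℂ) * (-(pd2 w x₁ 0 t)) ∧
      (F₂ x₁ b t - G₂ x₁ b t) = (μ : ℂ) * pd2 w x₁ b t) :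
    -- I₁ + I₂ = I₃ + I₄ − I₅ − I₆
    ((μ : ℂ) * ∫ t in T₁..T₂, ∫ x₂ in (0:ℝ)..b,
        ((w L x₂ t * pd1 u₀ L x₂ t - u₀ L x₂ t * pd1 w L x₂ t)
          - (w 0 x₂ t * pd1 u₀ 0 x₂ t - u₀ 0 x₂ t * pd1 w 0 x₂ t)))
    + (∫ t in T₁..T₂, ∫ x₂ in (0:ℝ)..b,
        ((F₁ L x₂ t - G₁ L x₂ t) * u₀ L x₂ t - (F₁ 0 x₂ t - G₁ 0 x₂ t) * u₀ 0 x₂ t))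
    = (∫ t in T₁..T₂, ∫ x₁ in (0:ℝ)..L, ∫ x₂ in (0:ℝ)..b,
        (f x₁ x₂ t - g x₁ x₂ t) * u₀ x₁ x₂ t)
      + (∫ t in T₁..T₂, ∫ x₁ in (0:ℝ)..L, ∫ x₂ in (0:ℝ)..b,
          ((F₁ x₁ x₂ t - G₁ x₁ x₂ t) * pd1 u₀ x₁ x₂ t
            + (F₂ x₁ x₂ t - G₂ x₁ x₂ t) * pd2 u₀ x₁ x₂ t))
      - (∫ x₁ in (0:ℝ)..L, ∫ x₂ in (0:ℝ)..b,
          ((H (u x₁ x₂ T₂) - H (v x₁ x₂ T₂)) * u₀ x₁ x₂ T₂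
            - (H (u x₁ x₂ T₁) - H (v x₁ x₂ T₁)) * u₀ x₁ x₂ T₁))
      - ((lam : ℂ) * ∫ t in T₁..T₂, ∫ x₁ in (0:ℝ)..L, ∫ x₂ in (0:ℝ)..b,
          (w x₁ x₂ t - (H (u x₁ x₂ t) - H (v x₁ x₂ t))) * u₀ x₁ x₂ t) := by
  subst hu₀
  obtain rfl : w = fun x y t => u x y t - v x y t := funext fun x => funext fun y => funext (hw x y)
  rw [cgo2_eq_planeWave]
  have hHc : Continuous H := Differentiable.continuous hH
  exact (green_identity_planeWave (W := fun x y t => u x y t - v x y t)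
    (Φ := fun x y t => H (u x y t) - H (v x y t)) (P₁ := fun x y t => F₁ x y t - G₁ x y t)
    (P₂ := fun x y t => F₂ x y t - G₂ x y t) (q := fun x y t => f x y t - g x y t)
    hL.le hb.le hT.le (cgoCoeff_dispersion s hμ hlam.le hd)
    (hu.spaceC1x.sub hv.spaceC1x) (hu.cont11.sub hv.cont11) (hu.cont22.sub hv.cont22)
    (fun x hx y hy t ht => hu.hasDerivAt_pd1_sub hv
      (Filter.eventually_of_mem (Ioo_mem_nhds hx.1 hx.2) fun _ hz =>
        ⟨Ioo_subset_Icc_self hz, hy, ht⟩))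
    (fun x hx y hy t ht => hu.hasDerivAt_pd2_sub hv
      (Filter.eventually_of_mem (Ioo_mem_nhds hy.1 hy.2) fun _ hz =>
        ⟨hx, Ioo_subset_Icc_self hz, ht⟩))
    ((hHc.comp_continuousOn hu.cont).sub (hHc.comp_continuousOn hv.cont))
    (((hH'.comp_continuousOn hu.cont).clm_apply hu.contt).sub
      ((hH'.comp_continuousOn hv.cont).clm_apply hv.contt))
    (fun x hx y hy t ht =>
      (hu.hasDerivAt_comp_thd (hH _) ⟨hx, hy, Ioo_subset_Icc_self ht⟩).sub
        (hv.hasDerivAt_comp_thd (hH _) ⟨hx, hy, Ioo_subset_Icc_self ht⟩))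
    (hF₁.sub hG₁) (hF₂.sub hG₂) (hf.sub hg) hPDE hBC :)

/-- **The integral identity of Lemma 3.3**, `I₁ + I₂ = I₃ + I₄ − I₅ − I₆`, on the
rectangle `R = (0,L) × (0,b)`; the boundary condition `ν·(F − G) = μ ∂_ν w` on the
horizontal edges encodes the measurement matching and the pointwise flux balance. -/
theorem integral_identity_I1_6
    (L b T₁ T₂ μ lam s d₁ d₂ : ℝ)
    (hL : 0 < L) (hb : 0 < b) (hT : T₁ < T₂)
    (hμ : 0 < μ) (hlam : 0 < lam) (hs : 0 < s)
    (hd : d₁ ^ 2 + d₂ ^ 2 = 1)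
    (u v w u₀ : ℝ → ℝ → ℝ → ℂ) (H : ℂ → ℂ)
    (F₁ F₂ G₁ G₂ f g : ℝ → ℝ → ℝ → ℂ)
    (hw : ∀ x₁ x₂ t, w x₁ x₂ t = u x₁ x₂ t - v x₁ x₂ t)
    (hu₀ : u₀ = cgo2 μ lam s d₁ d₂)
    (hu : SmoothC2x u (Set.Icc (0:ℝ) L ×ˢ (Set.Icc (0:ℝ) b ×ˢ Set.Icc T₁ T₂)))
    (hv : SmoothC2x v (Set.Icc (0:ℝ) L ×ˢ (Set.Icc (0:ℝ) b ×ˢ Set.Icc T₁ T₂)))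
    (hH : ∀ z, DifferentiableAt ℝ H z) (hH' : Continuous (fun z => fderiv ℝ H z))
    (hF₁ : SpaceC1x F₁ (Set.Icc (0:ℝ) L ×ˢ (Set.Icc (0:ℝ) b ×ˢ Set.Icc T₁ T₂)))
    (hF₂ : SpaceC1x F₂ (Set.Icc (0:ℝ) L ×ˢ (Set.Icc (0:ℝ) b ×ˢ Set.Icc T₁ T₂)))
    (hG₁ : SpaceC1x G₁ (Set.Icc (0:ℝ) L ×ˢ (Set.Icc (0:ℝ) b ×ˢ Set.Icc T₁ T₂)))
    (hG₂ : SpaceC1x G₂ (Set.Icc (0:ℝ) L ×ˢ (Set.Icc (0:ℝ) b ×ˢ Set.Icc T₁ T₂)))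
    (hf : ContinuousOn (fun p : ℝ × ℝ × ℝ => f p.1 p.2.1 p.2.2)
      (Set.Icc (0:ℝ) L ×ˢ (Set.Icc (0:ℝ) b ×ˢ Set.Icc T₁ T₂)))
    (hg : ContinuousOn (fun p : ℝ × ℝ × ℝ => g p.1 p.2.1 p.2.2)
      (Set.Icc (0:ℝ) L ×ˢ (Set.Icc (0:ℝ) b ×ˢ Set.Icc T₁ T₂)))
    -- (PDE)
    (hPDE : ∀ x₁ ∈ Set.Ioo (0:ℝ) L, ∀ x₂ ∈ Set.Ioo (0:ℝ) b, ∀ t ∈ Set.Ioo T₁ T₂,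
      pdt (fun a b' c => H (u a b' c) - H (v a b' c)) x₁ x₂ t
          - (μ : ℂ) * lap w x₁ x₂ t
        = (f x₁ x₂ t - g x₁ x₂ t)
          - (pd1 (fun a b' c => F₁ a b' c - G₁ a b' c) x₁ x₂ t
            + pd2 (fun a b' c => F₂ a b' c - G₂ a b' c) x₁ x₂ t))
    -- (BC) on both horizontal edges: `w = 0` and `ν·(F − G) = μ ν·∇ₓ w`
    (hBC : ∀ x₁ ∈ Set.Icc (0:ℝ) L, ∀ t ∈ Set.Icc T₁ T₂,
      w x₁ 0 t = 0 ∧ w x₁ b t = 0 ∧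
      -(F₂ x₁ 0 t - G₂ x₁ 0 t) = (μ : ℂ) * (-(pd2 w x₁ 0 t)) ∧
      (F₂ x₁ b t - G₂ x₁ b t) = (μ : ℂ) * pd2 w x₁ b t) :
    -- I₁ + I₂ = I₃ + I₄ − I₅ − I₆
    ((μ : ℂ) * ∫ t in T₁..T₂, ∫ x₂ in (0:ℝ)..b,
        ((w L x₂ t * pd1 u₀ L x₂ t - u₀ L x₂ t * pd1 w L x₂ t)
          - (w 0 x₂ t * pd1 u₀ 0 x₂ t - u₀ 0 x₂ t * pd1 w 0 x₂ t)))
    + (∫ t in T₁..T₂, ∫ x₂ in (0:ℝ)..b,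
        ((F₁ L x₂ t - G₁ L x₂ t) * u₀ L x₂ t - (F₁ 0 x₂ t - G₁ 0 x₂ t) * u₀ 0 x₂ t))
    = (∫ t in T₁..T₂, ∫ x₁ in (0:ℝ)..L, ∫ x₂ in (0:ℝ)..b,
        (f x₁ x₂ t - g x₁ x₂ t) * u₀ x₁ x₂ t)
      + (∫ t in T₁..T₂, ∫ x₁ in (0:ℝ)..L, ∫ x₂ in (0:ℝ)..b,
          ((F₁ x₁ x₂ t - G₁ x₁ x₂ t) * pd1 u₀ x₁ x₂ t
            + (F₂ x₁ x₂ t - G₂ x₁ x₂ t) * pd2 u₀ x₁ x₂ t))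
      - (∫ x₁ in (0:ℝ)..L, ∫ x₂ in (0:ℝ)..b,
          ((H (u x₁ x₂ T₂) - H (v x₁ x₂ T₂)) * u₀ x₁ x₂ T₂
            - (H (u x₁ x₂ T₁) - H (v x₁ x₂ T₁)) * u₀ x₁ x₂ T₁))
      - ((lam : ℂ) * ∫ t in T₁..T₂, ∫ x₁ in (0:ℝ)..L, ∫ x₂ in (0:ℝ)..b,
          (w x₁ x₂ t - (H (u x₁ x₂ t) - H (v x₁ x₂ t))) * u₀ x₁ x₂ t) :=
  integral_identity_I1_6_general L b T₁ T₂ μ lam s d₁ d₂ hL hb hT hμ hlam hd u v w u₀ H F₁ F₂ G₁ G₂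
    f g hw hu₀ hu hv hH hH' hF₁ hF₂ hG₁ hG₂ hf hg hPDE hBC
end
end

section
/- Assume the nozzle geometry and the 2D CGO function, with parameters additionally satisfying 1 ≤ s, s·ε ≤ 1, and ε ≤ s·ε^l ≤ 1. Let T > 0 and [T₁, T₂] ⊆ [0, T] with T₂ − T₁ = ε². Let α₄ ∈ (0, 1), C₄ > 0, and let w : D̄_ε × [T₁, T₂] → ℂ be continuously differentiable in (x, t), satisfy a parabolic C^{1,α₄} bound with constant C₄, and vanish on the lower graph boundary: w(x₁, γ(x₁), t) = 0 for all x₁ ∈ [0, ε^l] and t ∈ [T₁, T₂]. Define I₁ = μ∫_{T₁}^{T₂} [ ∫_{γ(ε^l)}^{γ(ε^l)+ε} (w·∂₁u₀ − u₀·∂₁w)(ε^l, x₂, t) dx₂ − ∫_0^ε (w·∂₁u₀ − u₀·∂₁w)(0, x₂, t) dx₂ ] dt. Then there exists a constant C > 0, depending only on μ, λ, T and C₄ (in particular independent of ε, s, l, γ), such that |I₁| ≤ C·( s²ε^{3+l} + s²ε^{2+l+(1+α₄)l₀} + ε^{2+α₄ l₀} + s³ε^{3+2l} + s·ε^{3+α₄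 l₀} ). -/
noncomputable section

/-- The parabolic distance `ρ = ‖x − y‖ + |t − τ|^{1/2}` in two space dimensions. -/
def prho (x₁ x₂ t y₁ y₂ τ : ℝ) : ℝ :=
  Real.sqrt ((x₁ - y₁) ^ 2 + (x₂ - y₂) ^ 2) + Real.sqrt |t - τ|

/-- Euclidean norm of the spatial gradient of `w`. -/
def gradNorm (w : ℝ → ℝ → ℝ → ℂ) (x₁ x₂ t : ℝ) : ℝ :=
  Real.sqrt (‖pd1 w x₁ x₂ t‖ ^ 2 + ‖pd2 w x₁ x₂ t‖ ^ 2)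

/-- The closed nozzle space–time cylinder
`D̄_ε × [T₁,T₂]`, `D_ε = {0 ≤ x₁ ≤ ε^l, γ(x₁) ≤ x₂ ≤ γ(x₁)+ε}`. -/
def nozzleCyl (ε l T₁ T₂ : ℝ) (γ : ℝ → ℝ) : Set (ℝ × ℝ × ℝ) :=
  {p : ℝ × ℝ × ℝ | p.1 ∈ Set.Icc 0 (ε ^ l) ∧ p.2.1 ∈ Set.Icc (γ p.1) (γ p.1 + ε) ∧
    p.2.2 ∈ Set.Icc T₁ T₂}

/-- Parabolic `C^{1,α}` bound with constant `C` on the set `S`. -/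
structure ParabolicC1 (w : ℝ → ℝ → ℝ → ℂ) (S : Set (ℝ × ℝ × ℝ)) (C α : ℝ) : Prop where
  bdd : ∀ p ∈ S, ‖w p.1 p.2.1 p.2.2‖ ≤ C
  grad_bdd : ∀ p ∈ S, gradNorm w p.1 p.2.1 p.2.2 ≤ C
  time_bdd : ∀ p ∈ S, ‖pdt w p.1 p.2.1 p.2.2‖ ≤ C
  lip : ∀ p ∈ S, ∀ q ∈ S,
    ‖w p.1 p.2.1 p.2.2 - w q.1 q.2.1 q.2.2‖ ≤
      C * prho p.1 p.2.1 p.2.2 q.1 q.2.1 q.2.2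
  grad_holder : ∀ p ∈ S, ∀ q ∈ S,
    Real.sqrt (‖pd1 w p.1 p.2.1 p.2.2 - pd1 w q.1 q.2.1 q.2.2‖ ^ 2 +
        ‖pd2 w p.1 p.2.1 p.2.2 - pd2 w q.1 q.2.1 q.2.2‖ ^ 2) ≤
      C * prho p.1 p.2.1 p.2.2 q.1 q.2.1 q.2.2 ^ α
  taylor : ∀ p ∈ S, ∀ q ∈ S,
    ‖w p.1 p.2.1 p.2.2 - w q.1 q.2.1 q.2.2
        - pd1 w q.1 q.2.1 q.2.2 * ((p.1 - q.1 : ℝ) : ℂ)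
        - pd2 w q.1 q.2.1 q.2.2 * ((p.2.1 - q.2.1 : ℝ) : ℂ)
        - pdt w q.1 q.2.1 q.2.2 * ((p.2.2 - q.2.2 : ℝ) : ℂ)‖ ≤
      C * prho p.1 p.2.1 p.2.2 q.1 q.2.1 q.2.2 ^ (1 + α)

/-- `w` is (jointly) continuously differentiable in `(x,t)` on the set `S`. -/
structure SmoothC1 (w : ℝ → ℝ → ℝ → ℂ) (S : Set (ℝ × ℝ × ℝ)) : Prop where
  cont : ContinuousOn (fun p : ℝ × ℝ × ℝ => w p.1 p.2.1 p.2.2) S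
  jdiff : ∀ p ∈ S, DifferentiableAt ℝ (fun q : ℝ × ℝ × ℝ => w q.1 q.2.1 q.2.2) p
  cont1 : ContinuousOn (fun p : ℝ × ℝ × ℝ => pd1 w p.1 p.2.1 p.2.2) S
  cont2 : ContinuousOn (fun p : ℝ × ℝ × ℝ => pd2 w p.1 p.2.1 p.2.2) S
  contt : ContinuousOn (fun p : ℝ × ℝ × ℝ => pdt w p.1 p.2.1 p.2.2) S

/-!
Only the term `ε^{2+α₄ l₀}` of the bound is needed. Since `w` vanishes on the lower graph
boundary and is `C₄`-Lipschitz, `|w| ≤ C₄ ε` on the nozzle. On the scale `s ε ≤ 1`, `s ε^l ≤ 1`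
the CGO function `u₀` is bounded, and its frequency `√(s² + λ)` is `O(1/ε)`, so `|∂₁u₀| = O(1/ε)`.
Hence the integrand `w ∂₁u₀ − u₀ ∂₁w` is `O(1)`, and integrating over two segments of length `ε`
and a time interval of length `ε²` gives `|I₁| = O(ε³) ≤ O(ε^{2+α₄ l₀})`.
-/

theorem norm_cgo2 (μ lam s d₁ d₂ x₁ x₂ t : ℝ) :
    ‖cgo2 μ lam s d₁ d₂ x₁ x₂ t‖ = Real.exp ((√μ)⁻¹ * (s * (d₁ * x₁ + d₂ * x₂)) + lam * t) := by
  rw [cgo2, Complex.norm_exp, ← Complex.ofReal_inv]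
  congr 1
  simp only [Complex.add_re, Complex.mul_re, Complex.sub_re, Complex.sub_im, Complex.add_im,
    Complex.mul_im, Complex.ofReal_re, Complex.ofReal_im, Complex.I_re, Complex.I_im]
  ring

theorem norm_cgo2_le {μ lam s d₁ d₂ x₁ x₂ t R T : ℝ} (hlam : 0 ≤ lam) (hd : d₁ ^ 2 + d₂ ^ 2 ≤ 1)
    (hs : 0 ≤ s) (hx : s * (|x₁| + |x₂|) ≤ R) (ht : t ≤ T) :
    ‖cgo2 μ lam s d₁ d₂ x₁ x₂ t‖ ≤ Real.exp ((√μ)⁻¹ * R + lam * T) := by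
  have hcoord {d : ℝ} (hd' : d ^ 2 ≤ 1) (x : ℝ) : d * x ≤ |x| :=
    (le_abs_self _).trans <| by
      rw [abs_mul]; exact mul_le_of_le_one_left (abs_nonneg _) ((sq_le_one_iff_abs_le_one d).1 hd')
  have hdx : d₁ * x₁ + d₂ * x₂ ≤ |x₁| + |x₂| :=
    add_le_add (hcoord (by nlinarith) x₁) (hcoord (by nlinarith) x₂)
  rw [norm_cgo2]
  gcongr
  exact (mul_le_mul_of_nonneg_left hdx hs).trans hx

theorem pd1_cgo2 (μ lam s d₁ d₂ x₁ x₂ t : ℝ) :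
    pd1 (cgo2 μ lam s d₁ d₂) x₁ x₂ t =
      ((√μ : ℝ) : ℂ)⁻¹ * ((s : ℂ) * d₁ + Complex.I * (√(s ^ 2 + lam) : ℝ) * d₂) *
        cgo2 μ lam s d₁ d₂ x₁ x₂ t := by
  set A : ℂ := (s : ℂ) * d₁ + Complex.I * (√(s ^ 2 + lam) : ℝ) * d₂
  set B : ℂ := (s : ℂ) * d₂ - Complex.I * (√(s ^ 2 + lam) : ℝ) * d₁
  have h : HasDerivAt (fun y : ℝ => (y : ℂ)) 1 x₁ := Complex.ofRealCLM.hasDerivAt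
  have := ((((h.const_mul A).add_const (B * x₂)).const_mul ((√μ : ℝ) : ℂ)⁻¹).add_const
    ((lam : ℂ) * t)).cexp
  unfold pd1 cgo2
  rw [this.deriv]
  ring

theorem norm_cgo2_coeff_le {lam s d₁ d₂ : ℝ} (hlam : 0 ≤ lam) (hd : d₁ ^ 2 + d₂ ^ 2 ≤ 1) :
    ‖(s : ℂ) * d₁ + Complex.I * (√(s ^ 2 + lam) : ℝ) * d₂‖ ≤ √(s ^ 2 + lam) := by
  have : (s : ℂ) * d₁ + Complex.I * (√(s ^ 2 + lam) : ℝ) * d₂ =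
      ((s * d₁ : ℝ) : ℂ) + ((√(s ^ 2 + lam) * d₂ : ℝ) : ℂ) * Complex.I := by push_cast; ring
  rw [this, Complex.norm_add_mul_I]
  apply Real.sqrt_le_sqrt
  rw [mul_pow, mul_pow, Real.sq_sqrt (by positivity)]
  nlinarith [sq_nonneg d₁, sq_nonneg d₂, sq_nonneg s]

theorem mul_norm_pd1_cgo2_le {μ lam s d₁ d₂ ε : ℝ} (hlam : 0 ≤ lam) (hd : d₁ ^ 2 + d₂ ^ 2 ≤ 1)
    (hs : 0 ≤ s) (hε₀ : 0 ≤ ε) (hε₁ : ε ≤ 1) (hsε : s * ε ≤ 1) (x₁ x₂ t : ℝ) :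
    ε * ‖pd1 (cgo2 μ lam s d₁ d₂) x₁ x₂ t‖ ≤
      (√μ)⁻¹ * √(1 + lam) * ‖cgo2 μ lam s d₁ d₂ x₁ x₂ t‖ := by
  have hfreq : ε * √(s ^ 2 + lam) ≤ √(1 + lam) := by
    rw [← Real.sqrt_sq hε₀, ← Real.sqrt_mul (sq_nonneg ε)]
    apply Real.sqrt_le_sqrt
    nlinarith [mul_le_mul_of_nonneg_left (pow_le_one₀ hε₀ hε₁ : ε ^ 2 ≤ 1) hlam,
      (pow_le_one₀ (mul_nonneg hs hε₀) hsε : (s * ε) ^ 2 ≤ 1)]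
  rw [pd1_cgo2, norm_mul, norm_mul, norm_inv, Complex.norm_real, Real.norm_of_nonneg
    (Real.sqrt_nonneg _)]
  calc ε * ((√μ)⁻¹ * ‖(s : ℂ) * d₁ + Complex.I * (√(s ^ 2 + lam) : ℝ) * d₂‖ *
        ‖cgo2 μ lam s d₁ d₂ x₁ x₂ t‖)
      ≤ ε * ((√μ)⁻¹ * √(s ^ 2 + lam) * ‖cgo2 μ lam s d₁ d₂ x₁ x₂ t‖) := by
        gcongr; exact norm_cgo2_coeff_le hlam hd
    _ = (√μ)⁻¹ * (ε * √(s ^ 2 + lam)) * ‖cgo2 μ lam s d₁ d₂ x₁ x₂ t‖ := by ring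
    _ ≤ (√μ)⁻¹ * √(1 + lam) * ‖cgo2 μ lam s d₁ d₂ x₁ x₂ t‖ := by gcongr

theorem norm_pd1_le_gradNorm (w : ℝ → ℝ → ℝ → ℂ) (x₁ x₂ t : ℝ) :
    ‖pd1 w x₁ x₂ t‖ ≤ gradNorm w x₁ x₂ t :=
  Real.le_sqrt_of_sq_le (le_add_of_nonneg_right (sq_nonneg _))

section Nozzle

variable {ε l T₁ T₂ : ℝ} {γ : ℝ → ℝ}

theorem abs_le_two_mul_of_mem_nozzleCyl (hγ : ∀ x ∈ Set.Icc (0:ℝ) (ε ^ l), |γ x| ≤ ε)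
    {x₁ x₂ t : ℝ} (hp : (x₁, x₂, t) ∈ nozzleCyl ε l T₁ T₂ γ) : |x₂| ≤ 2 * ε := by
  obtain ⟨hp₁, ⟨hlo, hhi⟩, -⟩ := hp
  have := abs_le.1 (hγ x₁ hp₁)
  exact abs_le.2 ⟨by linarith, by linarith⟩

theorem ParabolicC1.norm_le_of_eq_zero_on_graph {w : ℝ → ℝ → ℝ → ℂ} {C α : ℝ}
    (hw : ParabolicC1 w (nozzleCyl ε l T₁ T₂ γ) C α)
    (hw₀ : ∀ x₁ ∈ Set.Icc (0:ℝ) (ε ^ l), ∀ t ∈ Set.Icc T₁ T₂, w x₁ (γ x₁) t = 0)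
    {x₁ x₂ t : ℝ} (hp : (x₁, x₂, t) ∈ nozzleCyl ε l T₁ T₂ γ) : ‖w x₁ x₂ t‖ ≤ C * ε := by
  obtain ⟨hp₁, ⟨hlo, hhi⟩, hp₃⟩ := hp
  have hq : (x₁, γ x₁, t) ∈ nozzleCyl ε l T₁ T₂ γ := ⟨hp₁, ⟨le_rfl, by linarith⟩, hp₃⟩
  have hC : 0 ≤ C := (norm_nonneg _).trans (hw.bdd _ hq)
  have h := hw.lip (x₁, x₂, t) ⟨hp₁, ⟨hlo, hhi⟩, hp₃⟩ _ hq
  rw [hw₀ x₁ hp₁ t hp₃, sub_zero] at h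
  refine h.trans (mul_le_mul_of_nonneg_left ?_ hC)
  simp only [prho, sub_self, sq, zero_mul, zero_add, add_zero, abs_zero, Real.sqrt_zero]
  rw [Real.sqrt_mul_self_eq_abs, abs_of_nonneg (by linarith)]
  linarith

variable {μ lam s d₁ d₂ T : ℝ}

theorem norm_cgo2_le_of_mem_nozzleCyl (hlam : 0 ≤ lam) (hd : d₁ ^ 2 + d₂ ^ 2 ≤ 1) (hs : 0 ≤ s)
    (hsε : s * ε ≤ 1) (hsεl : s * ε ^ l ≤ 1) (hT₂ : T₂ ≤ T)
    (hγ : ∀ x ∈ Set.Icc (0:ℝ) (ε ^ l), |γ x| ≤ ε)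
    {x₁ x₂ t : ℝ} (hp : (x₁, x₂, t) ∈ nozzleCyl ε l T₁ T₂ γ) :
    ‖cgo2 μ lam s d₁ d₂ x₁ x₂ t‖ ≤ Real.exp ((√μ)⁻¹ * 3 + lam * T) := by
  have hx₂ := abs_le_two_mul_of_mem_nozzleCyl hγ hp
  obtain ⟨⟨hx₁, hx₁'⟩, -, -, ht⟩ := hp
  refine norm_cgo2_le hlam hd hs ?_ (ht.trans hT₂)
  rw [abs_of_nonneg hx₁]
  nlinarith [mul_le_mul_of_nonneg_left hx₁' hs, mul_le_mul_of_nonneg_left hx₂ hs]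

theorem norm_flux_le_of_mem_nozzleCyl {w : ℝ → ℝ → ℝ → ℂ} {C α : ℝ}
    (hw : ParabolicC1 w (nozzleCyl ε l T₁ T₂ γ) C α)
    (hw₀ : ∀ x₁ ∈ Set.Icc (0:ℝ) (ε ^ l), ∀ t ∈ Set.Icc T₁ T₂, w x₁ (γ x₁) t = 0)
    (hlam : 0 ≤ lam) (hd : d₁ ^ 2 + d₂ ^ 2 ≤ 1) (hs : 0 ≤ s) (hε₀ : 0 ≤ ε) (hε₁ : ε ≤ 1)
    (hsε : s * ε ≤ 1) (hsεl : s * ε ^ l ≤ 1) (hT₂ : T₂ ≤ T)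
    (hγ : ∀ x ∈ Set.Icc (0:ℝ) (ε ^ l), |γ x| ≤ ε)
    {x₁ x₂ t : ℝ} (hp : (x₁, x₂, t) ∈ nozzleCyl ε l T₁ T₂ γ) :
    ‖w x₁ x₂ t * pd1 (cgo2 μ lam s d₁ d₂) x₁ x₂ t
        - cgo2 μ lam s d₁ d₂ x₁ x₂ t * pd1 w x₁ x₂ t‖ ≤
      C * Real.exp ((√μ)⁻¹ * 3 + lam * T) * (1 + (√μ)⁻¹ * √(1 + lam)) := by
  set u := cgo2 μ lam s d₁ d₂
  have hC : 0 ≤ C := (norm_nonneg _).trans (hw.bdd _ hp)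
  have hw_small : ‖w x₁ x₂ t‖ ≤ C * ε := hw.norm_le_of_eq_zero_on_graph hw₀ hp
  have hpd1w : ‖pd1 w x₁ x₂ t‖ ≤ C :=
    (norm_pd1_le_gradNorm w x₁ x₂ t).trans (hw.grad_bdd _ hp)
  have hu : ‖u x₁ x₂ t‖ ≤ Real.exp ((√μ)⁻¹ * 3 + lam * T) :=
    norm_cgo2_le_of_mem_nozzleCyl hlam hd hs hsε hsεl hT₂ hγ hp
  have hpd1u := mul_norm_pd1_cgo2_le (μ := μ) hlam hd hs hε₀ hε₁ hsε x₁ x₂ t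
  calc _ ≤ ‖w x₁ x₂ t‖ * ‖pd1 u x₁ x₂ t‖ + ‖u x₁ x₂ t‖ * ‖pd1 w x₁ x₂ t‖ := by
        rw [← norm_mul, ← norm_mul]; exact norm_sub_le _ _
    _ ≤ C * ε * ‖pd1 u x₁ x₂ t‖ + ‖u x₁ x₂ t‖ * C := by gcongr
    _ ≤ C * ((√μ)⁻¹ * √(1 + lam) * ‖u x₁ x₂ t‖) + ‖u x₁ x₂ t‖ * C := by
        rw [mul_assoc]; gcongr
    _ = C * ‖u x₁ x₂ t‖ * (1 + (√μ)⁻¹ * √(1 + lam)) := by ring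
    _ ≤ _ := by gcongr

end Nozzle

theorem norm_integral_sub_integral_le {f g : ℝ → ℝ → ℂ} {a₁ b₁ a₂ b₂ T₁ T₂ B : ℝ}
    (h₁ : a₁ ≤ b₁) (h₂ : a₂ ≤ b₂) (hT : T₁ ≤ T₂)
    (hf : ∀ t ∈ Set.Icc T₁ T₂, ∀ x ∈ Set.Icc a₁ b₁, ‖f x t‖ ≤ B)
    (hg : ∀ t ∈ Set.Icc T₁ T₂, ∀ x ∈ Set.Icc a₂ b₂, ‖g x t‖ ≤ B) :
    ‖∫ t in T₁..T₂, ((∫ x in a₁..b₁, f x t) - ∫ x in a₂..b₂, g x t)‖ ≤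
      B * ((b₁ - a₁) + (b₂ - a₂)) * (T₂ - T₁) := by
  have hinner : ∀ {a b : ℝ} {h : ℝ → ℝ → ℂ}, a ≤ b →
      (∀ t ∈ Set.Icc T₁ T₂, ∀ x ∈ Set.Icc a b, ‖h x t‖ ≤ B) →
      ∀ t ∈ Set.Icc T₁ T₂, ‖∫ x in a..b, h x t‖ ≤ B * (b - a) := by
    intro a b h hab hh t ht
    refine (intervalIntegral.norm_integral_le_of_norm_le_const fun x hx => ?_).trans_eq
      (by rw [abs_of_nonneg (sub_nonneg.2 hab)])
    rw [Set.uIoc_of_le hab] at hx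
    exact hh t ht x (Set.Ioc_subset_Icc_self hx)
  refine (intervalIntegral.norm_integral_le_of_norm_le_const fun t ht => ?_).trans_eq
    (by rw [abs_of_nonneg (sub_nonneg.2 hT)])
  rw [Set.uIoc_of_le hT] at ht
  have ht' := Set.Ioc_subset_Icc_self ht
  calc _ ≤ _ := norm_sub_le _ _
    _ ≤ B * (b₁ - a₁) + B * (b₂ - a₂) :=
      add_le_add (hinner h₁ hf t ht') (hinner h₂ hg t ht')
    _ = _ := by ring

theorem boundary_term_estimate_I1_general
    (μ lam T C₄ α₄ : ℝ) (hμ : 0 < μ) (hlam : 0 < lam)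
    (hC₄ : 0 < C₄) (hα₄ : α₄ ∈ Set.Ioo (0:ℝ) 1) :
    ∃ C > 0, ∀ (ε l s d₁ d₂ T₁ T₂ : ℝ) (γ : ℝ → ℝ) (w : ℝ → ℝ → ℝ → ℂ),
      ε ∈ Set.Ioo (0:ℝ) 1 → 0 < l →
      ContDiffOn ℝ 2 γ (Set.Icc 0 (ε ^ l)) → γ 0 = 0 →
      derivWithin γ (Set.Icc 0 (ε ^ l)) 0 = 0 →
      (∀ x ∈ Set.Icc (0:ℝ) (ε ^ l), |γ x| ≤ ε) →
      d₁ < 0 → d₂ < 0 → d₁ ^ 2 + d₂ ^ 2 = 1 →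
      1 ≤ s → s * ε ≤ 1 → ε ≤ s * ε ^ l → s * ε ^ l ≤ 1 →
      0 ≤ T₁ → T₂ ≤ T → T₂ - T₁ = ε ^ 2 →
      SmoothC1 w (nozzleCyl ε l T₁ T₂ γ) →
      ParabolicC1 w (nozzleCyl ε l T₁ T₂ γ) C₄ α₄ →
      (∀ x₁ ∈ Set.Icc (0:ℝ) (ε ^ l), ∀ t ∈ Set.Icc T₁ T₂, w x₁ (γ x₁) t = 0) →
      ‖(μ : ℂ) * ∫ t in T₁..T₂,
          ((∫ x₂ in (γ (ε ^ l))..(γ (ε ^ l) + ε),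
              (w (ε ^ l) x₂ t * pd1 (cgo2 μ lam s d₁ d₂) (ε ^ l) x₂ t
                - cgo2 μ lam s d₁ d₂ (ε ^ l) x₂ t * pd1 w (ε ^ l) x₂ t))
            - ∫ x₂ in (0:ℝ)..ε,
              (w 0 x₂ t * pd1 (cgo2 μ lam s d₁ d₂) 0 x₂ t
                - cgo2 μ lam s d₁ d₂ 0 x₂ t * pd1 w 0 x₂ t))‖
        ≤ C * (s ^ 2 * ε ^ (3 + l) + s ^ 2 * ε ^ (2 + l + (1 + α₄) * min l 1)
            + ε ^ (2 + α₄ * min l 1) + s ^ 3 * ε ^ (3 + 2 * l)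
            + s * ε ^ (3 + α₄ * min l 1)) := by
  set B := C₄ * Real.exp ((√μ)⁻¹ * 3 + lam * T) * (1 + (√μ)⁻¹ * √(1 + lam))
  refine ⟨2 * μ * B, by positivity, ?_⟩
  intro ε l s d₁ d₂ T₁ T₂ γ w ⟨hε₀, hε₁⟩ hl _ hγ₀ _ hγ _ _ hd hs hsε _ hsεl _ hT₂ hT₂₁ _ hw hw₀
  have hflux {x₁ x₂ t : ℝ} (hp : (x₁, x₂, t) ∈ nozzleCyl ε l T₁ T₂ γ) :=
    norm_flux_le_of_mem_nozzleCyl (μ := μ) (d₁ := d₁) (d₂ := d₂) hw hw₀ hlam.le hd.le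
      (by linarith) hε₀.le hε₁.le hsε hsεl hT₂ hγ hp
  have hεl : 0 ≤ ε ^ l := Real.rpow_nonneg hε₀.le l
  have hε_cube : ε ^ (3:ℕ) ≤ ε ^ (2 + α₄ * min l 1) := by
    rw [← Real.rpow_natCast]
    refine Real.rpow_le_rpow_of_exponent_ge hε₀ hε₁.le ?_
    have := mul_le_one₀ hα₄.2.le (le_min hl.le zero_le_one) (min_le_right l 1)
    push_cast; linarith
  rw [norm_mul, Complex.norm_real, Real.norm_of_nonneg hμ.le]
  calc μ * ‖_‖
        ≤ μ * (B * ((γ (ε ^ l) + ε - γ (ε ^ l)) + (ε - 0)) * (T₂ - T₁)) := by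
        gcongr
        exact norm_integral_sub_integral_le (by linarith) hε₀.le (by nlinarith)
          (fun t ht x hx => hflux ⟨⟨hεl, le_rfl⟩, hx, ht⟩)
          (fun t ht x hx => hflux ⟨⟨le_rfl, hεl⟩, by rwa [hγ₀, zero_add], ht⟩)
    _ = 2 * μ * B * ε ^ (3:ℕ) := by rw [hT₂₁]; ring
    _ ≤ 2 * μ * B * ε ^ (2 + α₄ * min l 1) := by gcongr
    _ ≤ _ := by
        gcongr
        have : 0 ≤ s := by linarith
        linarith [show 0 ≤ s ^ 2 * ε ^ (3 + l) by positivity,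
          show 0 ≤ s ^ 2 * ε ^ (2 + l + (1 + α₄) * min l 1) by positivity,
          show 0 ≤ s ^ 3 * ε ^ (3 + 2 * l) by positivity,
          show 0 ≤ s * ε ^ (3 + α₄ * min l 1) by positivity]

/-- **Boundary-term estimate (Lemma 3.4).**
`I₁`, the lateral CGO boundary integral over the vertical cross-sections
`Γ₂ = {0}×[0,ε]` and `Γ₄ = {ε^l}×[γ(ε^l), γ(ε^l)+ε]` of the nozzle, is bounded by
`C (s²ε^{3+l} + s²ε^{2+l+(1+α₄)l₀} + ε^{2+α₄l₀} + s³ε^{3+2l} + s ε^{3+α₄l₀})`,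
with `C` depending only on `μ, λ, T, C₄`. -/
theorem boundary_term_estimate_I1
    (μ lam T C₄ α₄ : ℝ) (hμ : 0 < μ) (hlam : 0 < lam) (hT : 0 < T)
    (hC₄ : 0 < C₄) (hα₄ : α₄ ∈ Set.Ioo (0:ℝ) 1) :
    ∃ C > 0, ∀ (ε l s d₁ d₂ T₁ T₂ : ℝ) (γ : ℝ → ℝ) (w : ℝ → ℝ → ℝ → ℂ),
      ε ∈ Set.Ioo (0:ℝ) 1 → 0 < l →
      ContDiffOn ℝ 2 γ (Set.Icc 0 (ε ^ l)) → γ 0 = 0 →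
      derivWithin γ (Set.Icc 0 (ε ^ l)) 0 = 0 →
      (∀ x ∈ Set.Icc (0:ℝ) (ε ^ l), |γ x| ≤ ε) →
      d₁ < 0 → d₂ < 0 → d₁ ^ 2 + d₂ ^ 2 = 1 →
      1 ≤ s → s * ε ≤ 1 → ε ≤ s * ε ^ l → s * ε ^ l ≤ 1 →
      0 ≤ T₁ → T₂ ≤ T → T₂ - T₁ = ε ^ 2 →
      SmoothC1 w (nozzleCyl ε l T₁ T₂ γ) →
      ParabolicC1 w (nozzleCyl ε l T₁ T₂ γ) C₄ α₄ →
      (∀ x₁ ∈ Set.Icc (0:ℝ) (ε ^ l), ∀ t ∈ Set.Icc T₁ T₂, w x₁ (γ x₁) t = 0) →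
      ‖(μ : ℂ) * ∫ t in T₁..T₂,
          ((∫ x₂ in (γ (ε ^ l))..(γ (ε ^ l) + ε),
              (w (ε ^ l) x₂ t * pd1 (cgo2 μ lam s d₁ d₂) (ε ^ l) x₂ t
                - cgo2 μ lam s d₁ d₂ (ε ^ l) x₂ t * pd1 w (ε ^ l) x₂ t))
            - ∫ x₂ in (0:ℝ)..ε,
              (w 0 x₂ t * pd1 (cgo2 μ lam s d₁ d₂) 0 x₂ t
                - cgo2 μ lam s d₁ d₂ 0 x₂ t * pd1 w 0 x₂ t))‖
        ≤ C * (s ^ 2 * ε ^ (3 + l) + s ^ 2 * ε ^ (2 + l + (1 + α₄) * min l 1)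
            + ε ^ (2 + α₄ * min l 1) + s ^ 3 * ε ^ (3 + 2 * l)
            + s * ε ^ (3 + α₄ * min l 1)) :=
  boundary_term_estimate_I1_general μ lam T C₄ α₄ hμ hlam hC₄ hα₄
end
end

section
/- Let ε ∈ (0, 1), L > 0, α ∈ (0, 1), C > 0, and T₁ < T₂. Let γ : [0, L] → ℝ be continuously differentiable, and set D = {(x₁, x₂) ∈ ℝ² : 0 < x₁ < L, γ(x₁) < x₂ < γ(x₁)+ε}. Let w : D̄ × [T₁, T₂] → ℂ be continuously differentiable in (x, t) and satisfy a parabolic C^{1,α} bound with constant C, and suppose that for all x₁ ∈ [0, L] and t ∈ [T₁, T₂]: w(x₁, γ(x₁), t) = 0 and γ′(x₁)·∂₁w(x₁, γ(x₁), t) − ∂₂w(x₁, γ(x₁), t) = 0 (vanishing normal derivative along the lower graph boundary). Then ∇ₓw(x₁, γ(x₁), t) = 0 and ∂ₜw(x₁, γ(x₁), t) = 0 for all such (x₁, t), and consequently, for every (x₁, x₂, t) ∈ D̄ × [T₁, T₂]: |w(x₁, x₂, t)| ≤ C·|x₂ − γ(x₁)|^{1+α} ≤ C·ε^{1+α} and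 ‖∇ₓw(x₁, x₂, t)‖ ≤ C·|x₂ − γ(x₁)|^{α} ≤ C·ε^{α}. -/
noncomputable section

/-- The closed graph cylinder `D̄ × [T₁,T₂]` over `D = {0 < x₁ < L, γ(x₁) < x₂ < γ(x₁)+ε}`. -/
def graphCyl (L ε T₁ T₂ : ℝ) (γ : ℝ → ℝ) : Set (ℝ × ℝ × ℝ) :=
  {p : ℝ × ℝ × ℝ | p.1 ∈ Set.Icc 0 L ∧ p.2.1 ∈ Set.Icc (γ p.1) (γ p.1 + ε) ∧
    p.2.2 ∈ Set.Icc T₁ T₂}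

/-!
Along the lower boundary `x₂ = γ(x₁)` the function `w` vanishes identically, so its tangential
derivative `∂₁w + γ'∂₂w` and its time derivative vanish there. Together with the normal condition
`γ'∂₁w − ∂₂w = 0` this is a linear system of determinant `−(1 + γ'²) ≠ 0`, so the whole gradient
vanishes on the boundary. Derivatives are taken within `[0, L]` and `[T₁, T₂]`, where they are
unique, so this holds up to the endpoints. The point `(x₁, γ(x₁), t)` lies at parabolic distance
`|x₂ − γ(x₁)| ≤ ε` below `(x₁, x₂, t)`; there the first-order Taylor polynomial of `w` is zero and
the `C^{1,α}` bounds give the estimates.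
-/

theorem HasDerivWithinAt.eq_zero_of_eqOn_zero {F : Type*} [NormedAddCommGroup F]
    [NormedSpace ℝ F] {f : ℝ → F} {f' : F} {s : Set ℝ} {x : ℝ}
    (hf : HasDerivWithinAt f f' s x) (hs : UniqueDiffWithinAt ℝ s x) (hx : x ∈ s)
    (h0 : Set.EqOn f 0 s) : f' = 0 :=
  hs.eq_deriv s hf ((hasDerivWithinAt_const x s 0).congr_of_mem h0 hx)

theorem eq_zero_of_add_mul_eq_zero_of_mul_sub_eq_zero {a b : ℂ} {k : ℝ}
    (htan : a + k * b = 0) (hnor : k * a - b = 0) : a = 0 ∧ b = 0 := by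
  have hdet : ((1 + k ^ 2 : ℝ) : ℂ) ≠ 0 := by
    rw [Complex.ofReal_ne_zero]
    positivity
  have ha : a = 0 := by
    refine (mul_eq_zero.mp ?_).resolve_left hdet
    push_cast
    linear_combination htan + k * hnor
  exact ⟨ha, by simpa [ha] using hnor⟩

theorem prho_self_self (x₁ x₂ t y : ℝ) : prho x₁ x₂ t x₁ y t = |x₂ - y| := by
  simp [prho, Real.sqrt_sq_eq_abs]

section PartialDerivatives

variable {w : ℝ → ℝ → ℝ → ℂ} {x₁ x₂ t : ℝ}

theorem fderiv_uncurry_apply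
    (h : DifferentiableAt ℝ (fun q : ℝ × ℝ × ℝ => w q.1 q.2.1 q.2.2) (x₁, x₂, t)) (a b c : ℝ) :
    fderiv ℝ (fun q : ℝ × ℝ × ℝ => w q.1 q.2.1 q.2.2) (x₁, x₂, t) (a, b, c) =
      a * pd1 w x₁ x₂ t + b * pd2 w x₁ x₂ t + c * pdt w x₁ x₂ t := by
  set D := fderiv ℝ (fun q : ℝ × ℝ × ℝ => w q.1 q.2.1 q.2.2) (x₁, x₂, t)
  have h1 : pd1 w x₁ x₂ t = D (1, 0, 0) := ((h.hasFDerivAt.comp_hasDerivAt x₁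
    ((hasDerivAt_id' x₁).prodMk ((hasDerivAt_const x₁ x₂).prodMk (hasDerivAt_const x₁ t))) :)).deriv
  have h2 : pd2 w x₁ x₂ t = D (0, 1, 0) := ((h.hasFDerivAt.comp_hasDerivAt x₂
    ((hasDerivAt_const x₂ x₁).prodMk ((hasDerivAt_id' x₂).prodMk (hasDerivAt_const x₂ t))) :)).deriv
  have h3 : pdt w x₁ x₂ t = D (0, 0, 1) := ((h.hasFDerivAt.comp_hasDerivAt t
    ((hasDerivAt_const t x₁).prodMk ((hasDerivAt_const t x₂).prodMk (hasDerivAt_id' t))) :)).deriv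
  have hbasis : ((a, b, c) : ℝ × ℝ × ℝ) = a • (1, 0, 0) + b • (0, 1, 0) + c • (0, 0, 1) := by
    simp
  rw [hbasis, map_add, map_add, map_smul, map_smul, map_smul, h1, h2, h3]
  simp only [Complex.real_smul]

theorem DifferentiableAt.hasDerivWithinAt_uncurry_comp {c₁ c₂ c₃ : ℝ → ℝ} {v₁ v₂ v₃ : ℝ}
    {s : Set ℝ} {y : ℝ}
    (h : DifferentiableAt ℝ (fun q : ℝ × ℝ × ℝ => w q.1 q.2.1 q.2.2) (c₁ y, c₂ y, c₃ y))
    (h₁ : HasDerivWithinAt c₁ v₁ s y) (h₂ : HasDerivWithinAt c₂ v₂ s y)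
    (h₃ : HasDerivWithinAt c₃ v₃ s y) :
    HasDerivWithinAt (fun z => w (c₁ z) (c₂ z) (c₃ z))
      (v₁ * pd1 w (c₁ y) (c₂ y) (c₃ y) + v₂ * pd2 w (c₁ y) (c₂ y) (c₃ y) +
        v₃ * pdt w (c₁ y) (c₂ y) (c₃ y)) s y := by
  rw [← fderiv_uncurry_apply h]
  exact h.hasFDerivAt.comp_hasDerivWithinAt y (h₁.prodMk (h₂.prodMk h₃))

end PartialDerivatives

theorem grad_pdt_eq_zero_on_lower_boundary {L T₁ T₂ : ℝ} {γ : ℝ → ℝ} {w : ℝ → ℝ → ℝ → ℂ}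
    (hL : 0 < L) (hT : T₁ < T₂) (hγ : DifferentiableOn ℝ γ (Set.Icc 0 L))
    (hw : ∀ x₁ ∈ Set.Icc (0:ℝ) L, ∀ t ∈ Set.Icc T₁ T₂,
      DifferentiableAt ℝ (fun q : ℝ × ℝ × ℝ => w q.1 q.2.1 q.2.2) (x₁, γ x₁, t))
    (hbc : ∀ x₁ ∈ Set.Icc (0:ℝ) L, ∀ t ∈ Set.Icc T₁ T₂,
      w x₁ (γ x₁) t = 0 ∧
      ((derivWithin γ (Set.Icc 0 L) x₁ : ℝ) : ℂ) * pd1 w x₁ (γ x₁) t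
        - pd2 w x₁ (γ x₁) t = 0) :
    ∀ x₁ ∈ Set.Icc (0:ℝ) L, ∀ t ∈ Set.Icc T₁ T₂,
      pd1 w x₁ (γ x₁) t = 0 ∧ pd2 w x₁ (γ x₁) t = 0 ∧ pdt w x₁ (γ x₁) t = 0 := by
  intro x₁ hx₁ t ht
  have htangential : pd1 w x₁ (γ x₁) t +
      ((derivWithin γ (Set.Icc 0 L) x₁ : ℝ) : ℂ) * pd2 w x₁ (γ x₁) t = 0 := by
    simpa using ((hw x₁ hx₁ t ht).hasDerivWithinAt_uncurry_comp (hasDerivWithinAt_id x₁ _)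
      (hγ x₁ hx₁).hasDerivWithinAt (hasDerivWithinAt_const x₁ _ t)).eq_zero_of_eqOn_zero
      (uniqueDiffOn_Icc hL x₁ hx₁) hx₁ fun y hy => (hbc y hy t ht).1
  have htime : pdt w x₁ (γ x₁) t = 0 := by
    simpa using ((hw x₁ hx₁ t ht).hasDerivWithinAt_uncurry_comp (hasDerivWithinAt_const t _ x₁)
      (hasDerivWithinAt_const t _ (γ x₁)) (hasDerivWithinAt_id t _)).eq_zero_of_eqOn_zero
      (uniqueDiffOn_Icc hT t ht) ht fun τ hτ => (hbc x₁ hx₁ τ hτ).1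
  obtain ⟨h₁, h₂⟩ :=
    eq_zero_of_add_mul_eq_zero_of_mul_sub_eq_zero htangential (hbc x₁ hx₁ t ht).2
  exact ⟨h₁, h₂, htime⟩

section ParabolicC1

variable {w : ℝ → ℝ → ℝ → ℂ} {S : Set (ℝ × ℝ × ℝ)} {C α x₁ x₂ t y₁ y₂ τ : ℝ}

theorem ParabolicC1.norm_le_of_jet_eq_zero (hw : ParabolicC1 w S C α)
    (hx : (x₁, x₂, t) ∈ S) (hy : (y₁, y₂, τ) ∈ S) (h₀ : w y₁ y₂ τ = 0)
    (h₁ : pd1 w y₁ y₂ τ = 0) (h₂ : pd2 w y₁ y₂ τ = 0) (h₃ : pdt w y₁ y₂ τ = 0) :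
    ‖w x₁ x₂ t‖ ≤ C * prho x₁ x₂ t y₁ y₂ τ ^ (1 + α) := by
  simpa [h₀, h₁, h₂, h₃] using hw.taylor _ hx _ hy

theorem ParabolicC1.gradNorm_le_of_grad_eq_zero (hw : ParabolicC1 w S C α)
    (hx : (x₁, x₂, t) ∈ S) (hy : (y₁, y₂, τ) ∈ S)
    (h₁ : pd1 w y₁ y₂ τ = 0) (h₂ : pd2 w y₁ y₂ τ = 0) :
    gradNorm w x₁ x₂ t ≤ C * prho x₁ x₂ t y₁ y₂ τ ^ α := by
  simpa [gradNorm, h₁, h₂] using hw.grad_holder _ hx _ hy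

end ParabolicC1

theorem lower_mem_graphCyl {L ε T₁ T₂ x₁ t : ℝ} {γ : ℝ → ℝ} (hε : 0 ≤ ε)
    (hx₁ : x₁ ∈ Set.Icc 0 L) (ht : t ∈ Set.Icc T₁ T₂) :
    (x₁, γ x₁, t) ∈ graphCyl L ε T₁ T₂ γ :=
  ⟨hx₁, ⟨le_rfl, le_add_of_nonneg_right hε⟩, ht⟩

/-- **Interior smallness estimate (eqs. (3.49)–(3.51)).**
If `w` vanishes on the lower graph boundary together with its normal derivative there,
then its full spatial gradient and time derivative vanish on the lower boundary, and
consequently `|w| = O(|x₂ − γ(x₁)|^{1+α}) = O(ε^{1+α})` and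
`‖∇ₓw‖ = O(|x₂ − γ(x₁)|^{α}) = O(ε^{α})` throughout the thin domain. -/
theorem interior_smallness
    (ε L α C T₁ T₂ : ℝ) (γ : ℝ → ℝ) (w : ℝ → ℝ → ℝ → ℂ)
    (hε : ε ∈ Set.Ioo (0:ℝ) 1) (hL : 0 < L)
    (hα : α ∈ Set.Ioo (0:ℝ) 1) (hC : 0 < C) (hT : T₁ < T₂)
    (hγ : ContDiffOn ℝ 1 γ (Set.Icc 0 L))
    (hw : SmoothC1 w (graphCyl L ε T₁ T₂ γ))
    (hwpar : ParabolicC1 w (graphCyl L ε T₁ T₂ γ) C α)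
    (hbc : ∀ x₁ ∈ Set.Icc (0:ℝ) L, ∀ t ∈ Set.Icc T₁ T₂,
      w x₁ (γ x₁) t = 0 ∧
      ((derivWithin γ (Set.Icc 0 L) x₁ : ℝ) : ℂ) * pd1 w x₁ (γ x₁) t
        - pd2 w x₁ (γ x₁) t = 0) :
    (∀ x₁ ∈ Set.Icc (0:ℝ) L, ∀ t ∈ Set.Icc T₁ T₂,
      pd1 w x₁ (γ x₁) t = 0 ∧ pd2 w x₁ (γ x₁) t = 0 ∧ pdt w x₁ (γ x₁) t = 0) ∧
    (∀ x₁ ∈ Set.Icc (0:ℝ) L, ∀ x₂ ∈ Set.Icc (γ x₁) (γ x₁ + ε), ∀ t ∈ Set.Icc T₁ T₂,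
      (‖w x₁ x₂ t‖ ≤ C * |x₂ - γ x₁| ^ (1 + α) ∧
        C * |x₂ - γ x₁| ^ (1 + α) ≤ C * ε ^ (1 + α)) ∧
      (gradNorm w x₁ x₂ t ≤ C * |x₂ - γ x₁| ^ α ∧
        C * |x₂ - γ x₁| ^ α ≤ C * ε ^ α)) := by
  have hε₀ : 0 ≤ ε := hε.1.le
  have hjet := grad_pdt_eq_zero_on_lower_boundary hL hT (hγ.differentiableOn one_ne_zero)
    (fun x₁ hx₁ t ht => hw.jdiff _ (lower_mem_graphCyl hε₀ hx₁ ht)) hbc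
  refine ⟨hjet, fun x₁ hx₁ x₂ hx₂ t ht => ?_⟩
  obtain ⟨h₁, h₂, h₃⟩ := hjet x₁ hx₁ t ht
  have hx : (x₁, x₂, t) ∈ graphCyl L ε T₁ T₂ γ := ⟨hx₁, hx₂, ht⟩
  have hy := lower_mem_graphCyl (γ := γ) hε₀ hx₁ ht
  have hdist : |x₂ - γ x₁| ≤ ε := by
    rw [abs_of_nonneg (sub_nonneg.mpr hx₂.1)]
    linarith [hx₂.2]
  have hw_le := hwpar.norm_le_of_jet_eq_zero hx hy (hbc x₁ hx₁ t ht).1 h₁ h₂ h₃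
  have hgrad_le := hwpar.gradNorm_le_of_grad_eq_zero hx hy h₁ h₂
  rw [prho_self_self] at hw_le hgrad_le
  refine ⟨⟨hw_le, ?_⟩, ⟨hgrad_le, ?_⟩⟩ <;>
    refine mul_le_mul_of_nonneg_left (Real.rpow_le_rpow (abs_nonneg _) hdist ?_) hC.le <;>
    linarith [hα.1]
end
end

section
/- Assume the 3D nozzle geometry N_ε = {(x₁, x₂, x₃) ∈ ℝ³ : 0 < x₁ < ε, 0 < x₂ < ε^l, γ(x₂) < x₃ < γ(x₂)+ε}, where ε ∈ (0,1), l > 0, l₀ = min(l, 1), and γ : [0, ε^l] → ℝ is C² with γ(0) = 0, γ′(0) = 0, sup|γ| ≤ ε. Let u₀ be the 3D CGO function with parameters μ, λ, s > 0 and unit vector d = (d₁, d₂, d₃), d₁, d₂, d₃ < 0, and assume 1 ≤ s, s·ε ≤ 1, and ε ≤ s·ε^l ≤ 1. Let T > 0, [T₁, T₂] ⊆ [0, T] with T₂ − T₁ = ε², α₄ ∈ (0, 1), C₄ > 0. Let w : N̄_ε × [T₁, T₂] → ℂ be continuously differentiable in (x, t), satisfy a parabolic C^{1,α₄} bound with constant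 C₄, and vanish on the lower face: w(x₁, x₂, γ(x₂), t) = 0 for all x₁ ∈ [0, ε], x₂ ∈ [0, ε^l], t ∈ [T₁, T₂]. Define I₁ = μ∫_{T₁}^{T₂}[ ∫_0^ε ∫_{γ(ε^l)}^{γ(ε^l)+ε} (w·∂₂u₀ − u₀·∂₂w)(x₁, ε^l, x₃, t) dx₃ dx₁ − ∫_0^ε ∫_0^ε (w·∂₂u₀ − u₀·∂₂w)(x₁, 0, x₃, t) dx₃ dx₁ ] dt. Then there exists a constant C > 0, depending only on μ, λ, T and C₄ (in particular independent of ε, s, l, γ), such that |I₁| ≤ C·( s²ε^{4+l} + s²ε^{3+l+(1+α₄)l₀} + ε^{3+α₄ l₀} + s³ε^{4+2l} + s·ε^{4+α₄ l₀} ). -/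
noncomputable section

/-- Partial derivative in the first spatial variable. -/
def qd1 (f : ℝ → ℝ → ℝ → ℝ → ℂ) (x₁ x₂ x₃ t : ℝ) : ℂ := deriv (fun y => f y x₂ x₃ t) x₁

/-- Partial derivative in the second spatial variable. -/
def qd2 (f : ℝ → ℝ → ℝ → ℝ → ℂ) (x₁ x₂ x₃ t : ℝ) : ℂ := deriv (fun y => f x₁ y x₃ t) x₂

/-- Partial derivative in the third spatial variable. -/
def qd3 (f : ℝ → ℝ → ℝ → ℝ → ℂ) (x₁ x₂ x₃ t : ℝ) : ℂ := deriv (fun y => f x₁ x₂ y t) x₃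

/-- Partial derivative in time. -/
def qdt (f : ℝ → ℝ → ℝ → ℝ → ℂ) (x₁ x₂ x₃ t : ℝ) : ℂ := deriv (fun τ => f x₁ x₂ x₃ τ) t

/-- Spatial Laplacian `Δ = ∂₁² + ∂₂² + ∂₃²`. -/
def lap3 (f : ℝ → ℝ → ℝ → ℝ → ℂ) (x₁ x₂ x₃ t : ℝ) : ℂ :=
  qd1 (qd1 f) x₁ x₂ x₃ t + qd2 (qd2 f) x₁ x₂ x₃ t + qd3 (qd3 f) x₁ x₂ x₃ t

/-- The 3D complex geometric optics function
`u₀(x,t) = exp(μ^{-1/2}((s d₁ + i√(s²+λ) d₂)x₁ + (s d₂ − i√(s²+λ) d₁)x₂ + s d₃ x₃) + λt)`. -/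
def cgo3 (μ lam s d₁ d₂ d₃ : ℝ) (x₁ x₂ x₃ t : ℝ) : ℂ :=
  Complex.exp (((Real.sqrt μ : ℝ) : ℂ)⁻¹ *
      (((s : ℂ) * (d₁ : ℂ) + Complex.I * ((Real.sqrt (s ^ 2 + lam) : ℝ) : ℂ) * (d₂ : ℂ)) *
          (x₁ : ℂ) +
        ((s : ℂ) * (d₂ : ℂ) - Complex.I * ((Real.sqrt (s ^ 2 + lam) : ℝ) : ℂ) * (d₁ : ℂ)) *
          (x₂ : ℂ) +
        (s : ℂ) * (d₃ : ℂ) * (x₃ : ℂ)) +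
    (lam : ℂ) * (t : ℂ))

/-- The parabolic distance `ρ = ‖x − y‖ + |t − τ|^{1/2}` in three space dimensions. -/
def prho3 (x₁ x₂ x₃ t y₁ y₂ y₃ τ : ℝ) : ℝ :=
  Real.sqrt ((x₁ - y₁) ^ 2 + (x₂ - y₂) ^ 2 + (x₃ - y₃) ^ 2) + Real.sqrt |t - τ|

/-- Euclidean norm of the spatial gradient of `w`. -/
def gradNorm3 (w : ℝ → ℝ → ℝ → ℝ → ℂ) (x₁ x₂ x₃ t : ℝ) : ℝ :=
  Real.sqrt (‖qd1 w x₁ x₂ x₃ t‖ ^ 2 + ‖qd2 w x₁ x₂ x₃ t‖ ^ 2 +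
    ‖qd3 w x₁ x₂ x₃ t‖ ^ 2)

/-- The closed 3D nozzle space–time cylinder `N̄_ε × [T₁,T₂]`, where
`N_ε = {0 < x₁ < ε, 0 < x₂ < ε^l, γ(x₂) < x₃ < γ(x₂)+ε}`. -/
def tubeCyl (ε l T₁ T₂ : ℝ) (γ : ℝ → ℝ) : Set (ℝ × ℝ × ℝ × ℝ) :=
  {p : ℝ × ℝ × ℝ × ℝ | p.1 ∈ Set.Icc 0 ε ∧ p.2.1 ∈ Set.Icc 0 (ε ^ l) ∧
    p.2.2.1 ∈ Set.Icc (γ p.2.1) (γ p.2.1 + ε) ∧ p.2.2.2 ∈ Set.Icc T₁ T₂}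

/-- Parabolic `C^{1,α}` bound with constant `C` on the set `S` (three space dimensions). -/
structure ParabolicC1₃ (w : ℝ → ℝ → ℝ → ℝ → ℂ) (S : Set (ℝ × ℝ × ℝ × ℝ)) (C α : ℝ) : Prop where
  bdd : ∀ p ∈ S, ‖w p.1 p.2.1 p.2.2.1 p.2.2.2‖ ≤ C
  grad_bdd : ∀ p ∈ S, gradNorm3 w p.1 p.2.1 p.2.2.1 p.2.2.2 ≤ C
  time_bdd : ∀ p ∈ S, ‖qdt w p.1 p.2.1 p.2.2.1 p.2.2.2‖ ≤ C
  lip : ∀ p ∈ S, ∀ q ∈ S,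
    ‖w p.1 p.2.1 p.2.2.1 p.2.2.2 - w q.1 q.2.1 q.2.2.1 q.2.2.2‖ ≤
      C * prho3 p.1 p.2.1 p.2.2.1 p.2.2.2 q.1 q.2.1 q.2.2.1 q.2.2.2
  grad_holder : ∀ p ∈ S, ∀ q ∈ S,
    Real.sqrt
        (‖qd1 w p.1 p.2.1 p.2.2.1 p.2.2.2 - qd1 w q.1 q.2.1 q.2.2.1 q.2.2.2‖ ^ 2 +
          ‖qd2 w p.1 p.2.1 p.2.2.1 p.2.2.2 - qd2 w q.1 q.2.1 q.2.2.1 q.2.2.2‖ ^ 2 +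
          ‖qd3 w p.1 p.2.1 p.2.2.1 p.2.2.2 - qd3 w q.1 q.2.1 q.2.2.1 q.2.2.2‖ ^ 2) ≤
      C * prho3 p.1 p.2.1 p.2.2.1 p.2.2.2 q.1 q.2.1 q.2.2.1 q.2.2.2 ^ α
  taylor : ∀ p ∈ S, ∀ q ∈ S,
    ‖w p.1 p.2.1 p.2.2.1 p.2.2.2 - w q.1 q.2.1 q.2.2.1 q.2.2.2
        - qd1 w q.1 q.2.1 q.2.2.1 q.2.2.2 * ((p.1 - q.1 : ℝ) : ℂ)
        - qd2 w q.1 q.2.1 q.2.2.1 q.2.2.2 * ((p.2.1 - q.2.1 : ℝ) : ℂ)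
        - qd3 w q.1 q.2.1 q.2.2.1 q.2.2.2 * ((p.2.2.1 - q.2.2.1 : ℝ) : ℂ)
        - qdt w q.1 q.2.1 q.2.2.1 q.2.2.2 * ((p.2.2.2 - q.2.2.2 : ℝ) : ℂ)‖ ≤
      C * prho3 p.1 p.2.1 p.2.2.1 p.2.2.2 q.1 q.2.1 q.2.2.1 q.2.2.2 ^ (1 + α)

/-- `w` is (jointly) continuously differentiable in `(x,t)` on the set `S`. -/
structure SmoothC1₃ (w : ℝ → ℝ → ℝ → ℝ → ℂ) (S : Set (ℝ × ℝ × ℝ × ℝ)) : Prop where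
  cont : ContinuousOn (fun p : ℝ × ℝ × ℝ × ℝ => w p.1 p.2.1 p.2.2.1 p.2.2.2) S
  jdiff : ∀ p ∈ S,
    DifferentiableAt ℝ (fun q : ℝ × ℝ × ℝ × ℝ => w q.1 q.2.1 q.2.2.1 q.2.2.2) p
  cont1 : ContinuousOn (fun p : ℝ × ℝ × ℝ × ℝ => qd1 w p.1 p.2.1 p.2.2.1 p.2.2.2) S
  cont2 : ContinuousOn (fun p : ℝ × ℝ × ℝ × ℝ => qd2 w p.1 p.2.1 p.2.2.1 p.2.2.2) S
  cont3 : ContinuousOn (fun p : ℝ × ℝ × ℝ × ℝ => qd3 w p.1 p.2.1 p.2.2.1 p.2.2.2) S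
  contt : ContinuousOn (fun p : ℝ × ℝ × ℝ × ℝ => qdt w p.1 p.2.1 p.2.2.1 p.2.2.2) S

/-- `w` is continuous on `S`, (jointly) continuously differentiable in `(x,t)`,
and twice continuously differentiable in the space variables on `S`. -/
structure SmoothC2x₃ (w : ℝ → ℝ → ℝ → ℝ → ℂ) (S : Set (ℝ × ℝ × ℝ × ℝ)) : Prop where
  cont : ContinuousOn (fun p : ℝ × ℝ × ℝ × ℝ => w p.1 p.2.1 p.2.2.1 p.2.2.2) S
  jdiff : ∀ p ∈ S,
    DifferentiableAt ℝ (fun q : ℝ × ℝ × ℝ × ℝ => w q.1 q.2.1 q.2.2.1 q.2.2.2) p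
  d11 : ∀ p ∈ S, DifferentiableAt ℝ (fun y => qd1 w y p.2.1 p.2.2.1 p.2.2.2) p.1
  d22 : ∀ p ∈ S, DifferentiableAt ℝ (fun y => qd2 w p.1 y p.2.2.1 p.2.2.2) p.2.1
  d33 : ∀ p ∈ S, DifferentiableAt ℝ (fun y => qd3 w p.1 p.2.1 y p.2.2.2) p.2.2.1
  cont1 : ContinuousOn (fun p : ℝ × ℝ × ℝ × ℝ => qd1 w p.1 p.2.1 p.2.2.1 p.2.2.2) S
  cont2 : ContinuousOn (fun p : ℝ × ℝ × ℝ × ℝ => qd2 w p.1 p.2.1 p.2.2.1 p.2.2.2) S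
  cont3 : ContinuousOn (fun p : ℝ × ℝ × ℝ × ℝ => qd3 w p.1 p.2.1 p.2.2.1 p.2.2.2) S
  contt : ContinuousOn (fun p : ℝ × ℝ × ℝ × ℝ => qdt w p.1 p.2.1 p.2.2.1 p.2.2.2) S
  cont11 : ContinuousOn (fun p : ℝ × ℝ × ℝ × ℝ => qd1 (qd1 w) p.1 p.2.1 p.2.2.1 p.2.2.2) S
  cont22 : ContinuousOn (fun p : ℝ × ℝ × ℝ × ℝ => qd2 (qd2 w) p.1 p.2.1 p.2.2.1 p.2.2.2) S
  cont33 : ContinuousOn (fun p : ℝ × ℝ × ℝ × ℝ => qd3 (qd3 w) p.1 p.2.1 p.2.2.1 p.2.2.2) S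

/-- `f` is continuous on `S` and continuously differentiable in the space variables. -/
structure SpaceC1x₃ (f : ℝ → ℝ → ℝ → ℝ → ℂ) (S : Set (ℝ × ℝ × ℝ × ℝ)) : Prop where
  cont : ContinuousOn (fun p : ℝ × ℝ × ℝ × ℝ => f p.1 p.2.1 p.2.2.1 p.2.2.2) S
  d1 : ∀ p ∈ S, DifferentiableAt ℝ (fun y => f y p.2.1 p.2.2.1 p.2.2.2) p.1
  d2 : ∀ p ∈ S, DifferentiableAt ℝ (fun y => f p.1 y p.2.2.1 p.2.2.2) p.2.1
  d3 : ∀ p ∈ S, DifferentiableAt ℝ (fun y => f p.1 p.2.1 y p.2.2.2) p.2.2.1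
  cont1 : ContinuousOn (fun p : ℝ × ℝ × ℝ × ℝ => qd1 f p.1 p.2.1 p.2.2.1 p.2.2.2) S
  cont2 : ContinuousOn (fun p : ℝ × ℝ × ℝ × ℝ => qd2 f p.1 p.2.1 p.2.2.1 p.2.2.2) S
  cont3 : ContinuousOn (fun p : ℝ × ℝ × ℝ × ℝ => qd3 f p.1 p.2.1 p.2.2.1 p.2.2.2) S

/-- The admissible source class in 3D: `f(x,t,z,p)` is bounded by `C` and Hölder continuous
with constant `C`, exponent `α` in the spatial, state and gradient arguments and
exponent `α/2` in time. -/
structure SourceClass₃ (C α : ℝ) (f : ℝ → ℝ → ℝ → ℝ → ℂ → ℂ × ℂ × ℂ → ℂ) : Prop where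
  bdd : ∀ x₁ x₂ x₃ t z p, ‖f x₁ x₂ x₃ t z p‖ ≤ C
  space : ∀ x₁ x₂ x₃ x₁' x₂' x₃' t z p,
    ‖f x₁ x₂ x₃ t z p - f x₁' x₂' x₃' t z p‖ ≤
      C * Real.sqrt ((x₁ - x₁') ^ 2 + (x₂ - x₂') ^ 2 + (x₃ - x₃') ^ 2) ^ α
  time : ∀ x₁ x₂ x₃ t t' z p,
    ‖f x₁ x₂ x₃ t z p - f x₁ x₂ x₃ t' z p‖ ≤ C * |t - t'| ^ (α / 2)
  state : ∀ x₁ x₂ x₃ t z z' p,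
    ‖f x₁ x₂ x₃ t z p - f x₁ x₂ x₃ t z' p‖ ≤ C * ‖z - z'‖ ^ α
  grad : ∀ x₁ x₂ x₃ t z p p',
    ‖f x₁ x₂ x₃ t z p - f x₁ x₂ x₃ t z p'‖ ≤
      C * Real.sqrt (‖p.1 - p'.1‖ ^ 2 + ‖p.2.1 - p'.2.1‖ ^ 2 +
          ‖p.2.2 - p'.2.2‖ ^ 2) ^ α

/-- The admissible flux-component class in 3D: `F(x,t,z)` is bounded by `C` and Hölder
continuous with constant `C`, exponent `α` in space and state and `α/2` in time. -/
structure FluxClass₃ (C α : ℝ) (F : ℝ → ℝ → ℝ → ℝ → ℂ → ℂ) : Prop where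
  bdd : ∀ x₁ x₂ x₃ t z, ‖F x₁ x₂ x₃ t z‖ ≤ C
  space : ∀ x₁ x₂ x₃ x₁' x₂' x₃' t z,
    ‖F x₁ x₂ x₃ t z - F x₁' x₂' x₃' t z‖ ≤
      C * Real.sqrt ((x₁ - x₁') ^ 2 + (x₂ - x₂') ^ 2 + (x₃ - x₃') ^ 2) ^ α
  time : ∀ x₁ x₂ x₃ t t' z,
    ‖F x₁ x₂ x₃ t z - F x₁ x₂ x₃ t' z‖ ≤ C * |t - t'| ^ (α / 2)
  state : ∀ x₁ x₂ x₃ t z z',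
    ‖F x₁ x₂ x₃ t z - F x₁ x₂ x₃ t z'‖ ≤ C * ‖z - z'‖ ^ α

/-- The derivative of the nozzle curve `γ` (within `[0, ε^l]`). -/
def gammaD3 (ε l : ℝ) (γ : ℝ → ℝ) (x₂ : ℝ) : ℝ := derivWithin γ (Set.Icc 0 (ε ^ l)) x₂

/-- Normalisation factor `√(1 + γ′(x₂)²)` for the unit normal of a graph boundary. -/
def nrmγ3 (ε l : ℝ) (γ : ℝ → ℝ) (x₂ : ℝ) : ℝ := Real.sqrt (1 + gammaD3 ε l γ x₂ ^ 2)

open Classical in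
/-- The recovery exponent `τ` of the main theorem, with `a = α₃ α₄`. -/
def tauExp (l a : ℝ) : ℝ :=
  if l ≤ 1 / (1 + a) then a * l
  else if l < 1 then (1 - l * (1 - a)) / 2
  else (1 - l + a) / 2

/-! The crude pointwise bound suffices: on both cross-sections `w` vanishes on the lower face
`x₃ = γ(x₂)`, so the Lipschitz bound gives `|w| ≤ C₄ ε` there, while `|u₀| ≤ e^{μ^{-1/2} + λT}`
(all exponents `s dᵢ xᵢ` are nonpositive up to `s ε ≤ 1`) and `|∂₂u₀| ≲ s |u₀|`. Hence the
integrand is `O(s ε + 1)`, the cross-sections have area `ε²` and the time interval has length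
`ε²`, so `|I₁| ≲ s ε⁵ + ε⁴`; finally `s ε⁵ ≤ s² ε^{4+l}` because `ε ≤ s ε^l`, and
`ε⁴ ≤ ε^{3+α₄ l₀}`. -/

open Set

theorem norm_intervalIntegral_intervalIntegral_le {E : Type*} [NormedAddCommGroup E]
    [NormedSpace ℝ E] {f : ℝ → ℝ → E} {a b c d M : ℝ} (hab : a ≤ b) (hcd : c ≤ d)
    (hf : ∀ x ∈ Ioc a b, ∀ y ∈ Ioc c d, ‖f x y‖ ≤ M) :
    ‖∫ x in a..b, ∫ y in c..d, f x y‖ ≤ M * (d - c) * (b - a) := by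
  have hinner : ∀ x ∈ uIoc a b, ‖∫ y in c..d, f x y‖ ≤ M * (d - c) := by
    intro x hx
    rw [uIoc_of_le hab] at hx
    rw [← abs_of_nonneg (sub_nonneg.2 hcd)]
    exact intervalIntegral.norm_integral_le_of_norm_le_const
      fun y hy => hf x hx y (by rwa [uIoc_of_le hcd] at hy)
  rw [← abs_of_nonneg (sub_nonneg.2 hab)]
  exact intervalIntegral.norm_integral_le_of_norm_le_const hinner

namespace ParabolicC1₃

variable {w : ℝ → ℝ → ℝ → ℝ → ℂ} {S : Set (ℝ × ℝ × ℝ × ℝ)} {C α : ℝ}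

theorem norm_le_of_eq_zero (hw : ParabolicC1₃ w S C α) {x₁ x₂ x₃ y₃ t : ℝ}
    (hp : (x₁, x₂, x₃, t) ∈ S) (hq : (x₁, x₂, y₃, t) ∈ S) (h0 : w x₁ x₂ y₃ t = 0) :
    ‖w x₁ x₂ x₃ t‖ ≤ C * |x₃ - y₃| := by
  have h := hw.lip _ hp _ hq
  simpa [h0, prho3, Real.sqrt_sq_eq_abs] using h

theorem norm_qd2_le (hw : ParabolicC1₃ w S C α) {p : ℝ × ℝ × ℝ × ℝ} (hp : p ∈ S) :
    ‖qd2 w p.1 p.2.1 p.2.2.1 p.2.2.2‖ ≤ C := by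
  refine le_trans ?_ (hw.grad_bdd p hp)
  have hsq : ‖qd2 w p.1 p.2.1 p.2.2.1 p.2.2.2‖ ^ 2 ≤ ‖qd1 w p.1 p.2.1 p.2.2.1 p.2.2.2‖ ^ 2 +
      ‖qd2 w p.1 p.2.1 p.2.2.1 p.2.2.2‖ ^ 2 + ‖qd3 w p.1 p.2.1 p.2.2.1 p.2.2.2‖ ^ 2 := by
    nlinarith [sq_nonneg ‖qd1 w p.1 p.2.1 p.2.2.1 p.2.2.2‖,
      sq_nonneg ‖qd3 w p.1 p.2.1 p.2.2.1 p.2.2.2‖]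
  simpa [gradNorm3] using Real.abs_le_sqrt hsq

end ParabolicC1₃

section CGO

variable (μ lam s d₁ d₂ d₃ : ℝ)

theorem norm_cgo3 (x₁ x₂ x₃ t : ℝ) :
    ‖cgo3 μ lam s d₁ d₂ d₃ x₁ x₂ x₃ t‖ =
      Real.exp ((Real.sqrt μ)⁻¹ * (s * d₁ * x₁ + s * d₂ * x₂ + s * d₃ * x₃) + lam * t) := by
  rw [cgo3, Complex.norm_exp]
  congr 1
  simp [Complex.mul_re, Complex.sub_re, Complex.add_re]

theorem qd2_cgo3 (x₁ x₂ x₃ t : ℝ) :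
    qd2 (cgo3 μ lam s d₁ d₂ d₃) x₁ x₂ x₃ t =
      ((Real.sqrt μ : ℝ) : ℂ)⁻¹ *
        ((s : ℂ) * (d₂ : ℂ) - Complex.I * ((Real.sqrt (s ^ 2 + lam) : ℝ) : ℂ) * (d₁ : ℂ)) *
        cgo3 μ lam s d₁ d₂ d₃ x₁ x₂ x₃ t := by
  set c : ℂ := ((Real.sqrt μ : ℝ) : ℂ)⁻¹
  set P : ℂ := (s : ℂ) * d₁ + Complex.I * ((Real.sqrt (s ^ 2 + lam) : ℝ) : ℂ) * d₂
  set Q : ℂ := (s : ℂ) * d₂ - Complex.I * ((Real.sqrt (s ^ 2 + lam) : ℝ) : ℂ) * d₁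
  have harg : HasDerivAt (fun y : ℝ => c * (P * x₁ + Q * y + s * d₃ * x₃) + lam * t)
      (c * Q) x₂ := by
    simpa using ((((hasDerivAt_id x₂).ofReal_comp.const_mul Q).const_add (P * x₁)).add_const
      ((s : ℂ) * d₃ * x₃)).const_mul c |>.add_const ((lam : ℂ) * t)
  exact harg.cexp.deriv.trans (mul_comm _ _)

variable {μ lam s d₁ d₂ d₃}

theorem norm_cgo3_le {ε T x₁ x₂ x₃ t : ℝ} (hlam : 0 ≤ lam) (hs : 0 ≤ s) (hsε : s * ε ≤ 1)
    (hd₁ : d₁ ≤ 0) (hd₂ : d₂ ≤ 0) (hd₃ : -1 ≤ d₃) (hd₃' : d₃ ≤ 0)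
    (hx₁ : 0 ≤ x₁) (hx₂ : 0 ≤ x₂) (hx₃ : -ε ≤ x₃) (hε : 0 ≤ ε) (ht : t ≤ T) :
    ‖cgo3 μ lam s d₁ d₂ d₃ x₁ x₂ x₃ t‖ ≤ Real.exp ((Real.sqrt μ)⁻¹ + lam * T) := by
  rw [norm_cgo3, Real.exp_le_exp]
  refine add_le_add ?_ (mul_le_mul_of_nonneg_left ht hlam)
  have h₁ : s * d₁ * x₁ ≤ 0 := mul_nonpos_of_nonpos_of_nonneg (by nlinarith) hx₁
  have h₂ : s * d₂ * x₂ ≤ 0 := mul_nonpos_of_nonpos_of_nonneg (by nlinarith) hx₂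
  have h₃ : d₃ * x₃ ≤ ε := by nlinarith
  have h₃' : s * d₃ * x₃ ≤ 1 := by nlinarith
  have hsum : s * d₁ * x₁ + s * d₂ * x₂ + s * d₃ * x₃ ≤ 1 := by linarith
  simpa using mul_le_mul_of_nonneg_left hsum (inv_nonneg.2 (Real.sqrt_nonneg μ))

theorem norm_qd2_cgo3_le {x₁ x₂ x₃ t : ℝ} (hlam : 0 ≤ lam) (hs : 1 ≤ s)
    (hd₁ : |d₁| ≤ 1) (hd₂ : |d₂| ≤ 1) :
    ‖qd2 (cgo3 μ lam s d₁ d₂ d₃) x₁ x₂ x₃ t‖ ≤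
      (Real.sqrt μ)⁻¹ * (2 + Real.sqrt lam) * s * ‖cgo3 μ lam s d₁ d₂ d₃ x₁ x₂ x₃ t‖ := by
  have hr : Real.sqrt (s ^ 2 + lam) ≤ s + Real.sqrt lam := by
    have := Real.sq_sqrt (show 0 ≤ s ^ 2 + lam by positivity)
    nlinarith [Real.sq_sqrt hlam, Real.sqrt_nonneg (s ^ 2 + lam), Real.sqrt_nonneg lam]
  have hQ : ‖(s : ℂ) * d₂ - Complex.I * ((Real.sqrt (s ^ 2 + lam) : ℝ) : ℂ) * d₁‖ ≤
      (2 + Real.sqrt lam) * s := by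
    refine (norm_sub_le _ _).trans ?_
    simp only [norm_mul, Complex.norm_real, Complex.norm_I, Real.norm_eq_abs, one_mul,
      abs_of_nonneg (Real.sqrt_nonneg _), abs_of_nonneg (zero_le_one.trans hs)]
    nlinarith [abs_nonneg d₁, abs_nonneg d₂, Real.sqrt_nonneg lam, Real.sqrt_nonneg (s ^ 2 + lam)]
  rw [qd2_cgo3, norm_mul, norm_mul, norm_inv, Complex.norm_real,
    Real.norm_of_nonneg (Real.sqrt_nonneg μ)]
  have := mul_le_mul_of_nonneg_right (mul_le_mul_of_nonneg_left hQ
    (inv_nonneg.2 (Real.sqrt_nonneg μ))) (norm_nonneg (cgo3 μ lam s d₁ d₂ d₃ x₁ x₂ x₃ t))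
  linarith

end CGO

/-- The two terms of `I₁` are `sectionFlux u₀ w ε x₂ a b t` on `Ω_ε′ = {x₂ = ε^l}` and
`Ω_ε = {x₂ = 0}`. -/
def sectionFlux (u w : ℝ → ℝ → ℝ → ℝ → ℂ) (ε x₂ a b t : ℝ) : ℂ :=
  ∫ x₁ in (0:ℝ)..ε, ∫ x₃ in a..b,
    (w x₁ x₂ x₃ t * qd2 u x₁ x₂ x₃ t - u x₁ x₂ x₃ t * qd2 w x₁ x₂ x₃ t)

section CrossSection

variable {μ lam s d₁ d₂ d₃ ε l T T₁ T₂ C₄ α₄ x₂ t : ℝ} {γ : ℝ → ℝ} {w : ℝ → ℝ → ℝ → ℝ → ℂ}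

theorem norm_sectionFlux_integrand_le (hlam : 0 ≤ lam) (hs : 1 ≤ s) (hsε : s * ε ≤ 1)
    (hd₁ : d₁ ≤ 0) (hd₂ : d₂ ≤ 0) (hd₃ : d₃ ≤ 0) (hd : d₁ ^ 2 + d₂ ^ 2 + d₃ ^ 2 = 1)
    (hT₂ : T₂ ≤ T) (hw : ParabolicC1₃ w (tubeCyl ε l T₁ T₂ γ) C₄ α₄)
    (hx₂ : x₂ ∈ Icc 0 (ε ^ l)) (hγ : |γ x₂| ≤ ε) (ht : t ∈ Icc T₁ T₂)
    {x₁ x₃ : ℝ} (hx₁ : x₁ ∈ Icc 0 ε) (hx₃ : x₃ ∈ Icc (γ x₂) (γ x₂ + ε))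
    (hw0 : w x₁ x₂ (γ x₂) t = 0) :
    ‖w x₁ x₂ x₃ t * qd2 (cgo3 μ lam s d₁ d₂ d₃) x₁ x₂ x₃ t
        - cgo3 μ lam s d₁ d₂ d₃ x₁ x₂ x₃ t * qd2 w x₁ x₂ x₃ t‖ ≤
      C₄ * Real.exp ((Real.sqrt μ)⁻¹ + lam * T) *
        ((Real.sqrt μ)⁻¹ * (2 + Real.sqrt lam) * s * ε + 1) := by
  have hε : 0 ≤ ε := hx₁.1.trans hx₁.2
  have hd₁' : |d₁| ≤ 1 := abs_le.2 ⟨by nlinarith, by linarith⟩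
  have hd₂' : |d₂| ≤ 1 := abs_le.2 ⟨by nlinarith, by linarith⟩
  have hp : (x₁, x₂, x₃, t) ∈ tubeCyl ε l T₁ T₂ γ := ⟨hx₁, hx₂, hx₃, ht⟩
  have hq : (x₁, x₂, γ x₂, t) ∈ tubeCyl ε l T₁ T₂ γ := ⟨hx₁, hx₂, ⟨le_rfl, by linarith⟩, ht⟩
  have hC₄ : 0 ≤ C₄ := (norm_nonneg _).trans (hw.bdd _ hp)
  have hw_le : ‖w x₁ x₂ x₃ t‖ ≤ C₄ * ε := by
    refine (hw.norm_le_of_eq_zero hp hq hw0).trans (mul_le_mul_of_nonneg_left ?_ hC₄)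
    rw [abs_le]
    constructor <;> linarith [hx₃.1, hx₃.2]
  have hu_le : ‖cgo3 μ lam s d₁ d₂ d₃ x₁ x₂ x₃ t‖ ≤ Real.exp ((Real.sqrt μ)⁻¹ + lam * T) :=
    norm_cgo3_le hlam (by linarith) hsε hd₁ hd₂ (by nlinarith) hd₃ hx₁.1 hx₂.1
      (by linarith [(abs_le.1 hγ).1, hx₃.1]) hε (ht.2.trans hT₂)
  have hdu_le : ‖qd2 (cgo3 μ lam s d₁ d₂ d₃) x₁ x₂ x₃ t‖ ≤
      (Real.sqrt μ)⁻¹ * (2 + Real.sqrt lam) * s * Real.exp ((Real.sqrt μ)⁻¹ + lam * T) :=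
    (norm_qd2_cgo3_le hlam hs hd₁' hd₂').trans (mul_le_mul_of_nonneg_left hu_le (by positivity))
  have hdw_le : ‖qd2 w x₁ x₂ x₃ t‖ ≤ C₄ := hw.norm_qd2_le hp
  refine (norm_sub_le _ _).trans ?_
  rw [norm_mul, norm_mul]
  calc _ ≤ C₄ * ε * ((Real.sqrt μ)⁻¹ * (2 + Real.sqrt lam) * s *
          Real.exp ((Real.sqrt μ)⁻¹ + lam * T)) + Real.exp ((Real.sqrt μ)⁻¹ + lam * T) * C₄ := by
        gcongr
    _ = _ := by ring

theorem norm_sectionFlux_le (hlam : 0 ≤ lam) (hs : 1 ≤ s) (hε : 0 ≤ ε)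
    (hsε : s * ε ≤ 1) (hd₁ : d₁ ≤ 0) (hd₂ : d₂ ≤ 0) (hd₃ : d₃ ≤ 0)
    (hd : d₁ ^ 2 + d₂ ^ 2 + d₃ ^ 2 = 1) (hT₂ : T₂ ≤ T)
    (hw : ParabolicC1₃ w (tubeCyl ε l T₁ T₂ γ) C₄ α₄)
    (hx₂ : x₂ ∈ Icc 0 (ε ^ l)) (hγ : |γ x₂| ≤ ε) (ht : t ∈ Icc T₁ T₂)
    (hw0 : ∀ x₁ ∈ Icc 0 ε, w x₁ x₂ (γ x₂) t = 0) :
    ‖sectionFlux (cgo3 μ lam s d₁ d₂ d₃) w ε x₂ (γ x₂) (γ x₂ + ε) t‖ ≤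
      C₄ * Real.exp ((Real.sqrt μ)⁻¹ + lam * T) *
        ((Real.sqrt μ)⁻¹ * (2 + Real.sqrt lam) * s * ε + 1) * ε * ε := by
  have h := norm_intervalIntegral_intervalIntegral_le hε (by linarith : γ x₂ ≤ γ x₂ + ε)
    fun x₁ hx₁ x₃ hx₃ => norm_sectionFlux_integrand_le (μ := μ) hlam hs hsε hd₁ hd₂ hd₃ hd hT₂
      hw hx₂ hγ ht (Ioc_subset_Icc_self hx₁) (Ioc_subset_Icc_self hx₃)
      (hw0 x₁ (Ioc_subset_Icc_self hx₁))
  rwa [add_sub_cancel_left, sub_zero] at h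

end CrossSection

def boundaryRate3 (ε l s α : ℝ) : ℝ :=
  s ^ 2 * ε ^ (4 + l) + s ^ 2 * ε ^ (3 + l + (1 + α) * min l 1) + ε ^ (3 + α * min l 1)
    + s ^ 3 * ε ^ (4 + 2 * l) + s * ε ^ (4 + α * min l 1)

section Rate

variable {ε l s α : ℝ}

theorem boundaryRate3_terms_nonneg (hε : 0 < ε) (hs : 0 ≤ s) :
    0 ≤ s ^ 2 * ε ^ (3 + l + (1 + α) * min l 1) ∧ 0 ≤ s ^ 3 * ε ^ (4 + 2 * l) ∧
      0 ≤ s * ε ^ (4 + α * min l 1) ∧ 0 ≤ s ^ 2 * ε ^ (4 + l) ∧ 0 ≤ ε ^ (3 + α * min l 1) := by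
  refine ⟨?_, ?_, ?_, ?_, ?_⟩ <;> positivity

theorem mul_pow_five_le_boundaryRate3 (hε : 0 < ε) (hs : 0 ≤ s) (hεs : ε ≤ s * ε ^ l) :
    s * ε ^ 5 ≤ boundaryRate3 ε l s α := by
  have h := mul_le_mul_of_nonneg_left hεs (by positivity : (0:ℝ) ≤ s * ε ^ 4)
  have hsplit : ε ^ ((4:ℝ) + l) = ε ^ 4 * ε ^ l := by
    rw [Real.rpow_add hε, Real.rpow_ofNat]
  obtain ⟨h₂, h₃, h₄, -, h₅⟩ := boundaryRate3_terms_nonneg (l := l) (α := α) hε hs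
  rw [boundaryRate3, hsplit]
  nlinarith

theorem pow_four_le_boundaryRate3 (hε : 0 < ε) (hε1 : ε ≤ 1) (hs : 0 ≤ s) (hl : 0 ≤ l)
    (hα : α ≤ 1) : ε ^ 4 ≤ boundaryRate3 ε l s α := by
  have hexp : 3 + α * min l 1 ≤ (4:ℝ) := by
    nlinarith [min_le_right l 1, le_min hl zero_le_one]
  have h : ε ^ 4 ≤ ε ^ (3 + α * min l 1) := by
    rw [← Real.rpow_ofNat]
    exact Real.rpow_le_rpow_of_exponent_ge hε hε1 (by exact_mod_cast hexp)
  obtain ⟨h₂, h₃, h₄, h₁, -⟩ := boundaryRate3_terms_nonneg (l := l) (α := α) hε hs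
  rw [boundaryRate3]
  linarith

end Rate

theorem boundary_term_estimate_I1_3d_general
    (μ lam T C₄ α₄ : ℝ) (hμ : 0 < μ) (hlam : 0 < lam)
    (hC₄ : 0 < C₄) (hα₄ : α₄ ∈ Set.Ioo (0:ℝ) 1) :
    ∃ C > 0, ∀ (ε l s d₁ d₂ d₃ T₁ T₂ : ℝ) (γ : ℝ → ℝ) (w : ℝ → ℝ → ℝ → ℝ → ℂ),
      ε ∈ Set.Ioo (0:ℝ) 1 → 0 < l →
      ContDiffOn ℝ 2 γ (Set.Icc 0 (ε ^ l)) → γ 0 = 0 →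
      derivWithin γ (Set.Icc 0 (ε ^ l)) 0 = 0 →
      (∀ x ∈ Set.Icc (0:ℝ) (ε ^ l), |γ x| ≤ ε) →
      d₁ < 0 → d₂ < 0 → d₃ < 0 → d₁ ^ 2 + d₂ ^ 2 + d₃ ^ 2 = 1 →
      1 ≤ s → s * ε ≤ 1 → ε ≤ s * ε ^ l → s * ε ^ l ≤ 1 →
      0 ≤ T₁ → T₂ ≤ T → T₂ - T₁ = ε ^ 2 →
      SmoothC1₃ w (tubeCyl ε l T₁ T₂ γ) →
      ParabolicC1₃ w (tubeCyl ε l T₁ T₂ γ) C₄ α₄ →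
      (∀ x₁ ∈ Set.Icc (0:ℝ) ε, ∀ x₂ ∈ Set.Icc (0:ℝ) (ε ^ l), ∀ t ∈ Set.Icc T₁ T₂,
        w x₁ x₂ (γ x₂) t = 0) →
      ‖(μ : ℂ) * ∫ t in T₁..T₂,
          ((∫ x₁ in (0:ℝ)..ε, ∫ x₃ in (γ (ε ^ l))..(γ (ε ^ l) + ε),
              (w x₁ (ε ^ l) x₃ t * qd2 (cgo3 μ lam s d₁ d₂ d₃) x₁ (ε ^ l) x₃ t
                - cgo3 μ lam s d₁ d₂ d₃ x₁ (ε ^ l) x₃ t * qd2 w x₁ (ε ^ l) x₃ t))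
            - ∫ x₁ in (0:ℝ)..ε, ∫ x₃ in (0:ℝ)..ε,
              (w x₁ 0 x₃ t * qd2 (cgo3 μ lam s d₁ d₂ d₃) x₁ 0 x₃ t
                - cgo3 μ lam s d₁ d₂ d₃ x₁ 0 x₃ t * qd2 w x₁ 0 x₃ t))‖
        ≤ C * (s ^ 2 * ε ^ (4 + l) + s ^ 2 * ε ^ (3 + l + (1 + α₄) * min l 1)
            + ε ^ (3 + α₄ * min l 1) + s ^ 3 * ε ^ (4 + 2 * l)
            + s * ε ^ (4 + α₄ * min l 1)) := by
  set K₀ := Real.exp ((Real.sqrt μ)⁻¹ + lam * T)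
  set K₁ := (Real.sqrt μ)⁻¹ * (2 + Real.sqrt lam)
  refine ⟨2 * μ * C₄ * K₀ * (K₁ + 1), by positivity, ?_⟩
  intro ε l s d₁ d₂ d₃ T₁ T₂ γ w ⟨hε, hε1⟩ hl _ hγ0 _ hγ hd₁ hd₂ hd₃ hd hs hsε hεs _ _ hT₂ hT
    _ hw hw0
  have h0_mem : (0:ℝ) ∈ Icc 0 (ε ^ l) := ⟨le_rfl, by positivity⟩
  have hεl_mem : ε ^ l ∈ Icc 0 (ε ^ l) := ⟨by positivity, le_rfl⟩
  have hslice : ∀ t ∈ uIoc T₁ T₂,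
      ‖sectionFlux (cgo3 μ lam s d₁ d₂ d₃) w ε (ε ^ l) (γ (ε ^ l)) (γ (ε ^ l) + ε) t
        - sectionFlux (cgo3 μ lam s d₁ d₂ d₃) w ε 0 0 ε t‖ ≤
      2 * (C₄ * K₀ * (K₁ * s * ε + 1) * ε * ε) := by
    intro t ht
    rw [uIoc_of_le (by nlinarith)] at ht
    replace ht : t ∈ Icc T₁ T₂ := Ioc_subset_Icc_self ht
    have htop := norm_sectionFlux_le (μ := μ) hlam.le hs hε.le hsε hd₁.le hd₂.le hd₃.le
      hd hT₂ hw hεl_mem (hγ _ hεl_mem) ht fun x₁ hx₁ => hw0 x₁ hx₁ _ hεl_mem t ht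
    have hbot := norm_sectionFlux_le (μ := μ) hlam.le hs hε.le hsε hd₁.le hd₂.le hd₃.le
      hd hT₂ hw h0_mem (hγ _ h0_mem) ht fun x₁ hx₁ => hw0 x₁ hx₁ _ h0_mem t ht
    rw [hγ0, zero_add] at hbot
    exact (norm_sub_le _ _).trans (by linarith)
  have htime := intervalIntegral.norm_integral_le_of_norm_le_const hslice
  rw [hT, abs_of_nonneg (by positivity)] at htime
  have hrate := add_le_add (mul_le_mul_of_nonneg_left (mul_pow_five_le_boundaryRate3 (α := α₄)
    hε (by linarith) hεs) (by positivity : 0 ≤ K₁)) (pow_four_le_boundaryRate3 (s := s) hε hε1.le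
    (by linarith) hl.le hα₄.2.le)
  rw [norm_mul, Complex.norm_real, Real.norm_of_nonneg hμ.le]
  calc μ * ‖_‖ ≤ μ * (2 * (C₄ * K₀ * (K₁ * s * ε + 1) * ε * ε) * ε ^ 2) :=
        mul_le_mul_of_nonneg_left htime hμ.le
    _ = 2 * μ * C₄ * K₀ * (K₁ * (s * ε ^ 5) + ε ^ 4) := by ring
    _ ≤ 2 * μ * C₄ * K₀ * (K₁ * boundaryRate3 ε l s α₄ + boundaryRate3 ε l s α₄) :=
        mul_le_mul_of_nonneg_left hrate (by positivity)
    _ = _ := by rw [boundaryRate3]; ring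

/-- **Three-dimensional boundary-term estimate (Lemma 4.1).**
`I₁` is the CGO-weighted integral over the two interior cross-sections
`Ω_ε = {x₂ = 0}` and `Ω_ε′ = {x₂ = ε^l}` of the thin 3D nozzle; if `w` is `C¹` in `(x,t)`,
satisfies the parabolic `C^{1,α₄}` bound with constant `C₄` and vanishes on the lower
face `x₃ = γ(x₂)`, then
`|I₁| ≤ C (s²ε^{4+l} + s²ε^{3+l+(1+α₄)l₀} + ε^{3+α₄l₀} + s³ε^{4+2l} + s ε^{4+α₄l₀})`,
with `C` depending only on `μ, λ, T, C₄`. -/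
theorem boundary_term_estimate_I1_3d
    (μ lam T C₄ α₄ : ℝ) (hμ : 0 < μ) (hlam : 0 < lam) (hT : 0 < T)
    (hC₄ : 0 < C₄) (hα₄ : α₄ ∈ Set.Ioo (0:ℝ) 1) :
    ∃ C > 0, ∀ (ε l s d₁ d₂ d₃ T₁ T₂ : ℝ) (γ : ℝ → ℝ) (w : ℝ → ℝ → ℝ → ℝ → ℂ),
      ε ∈ Set.Ioo (0:ℝ) 1 → 0 < l →
      ContDiffOn ℝ 2 γ (Set.Icc 0 (ε ^ l)) → γ 0 = 0 →
      derivWithin γ (Set.Icc 0 (ε ^ l)) 0 = 0 →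
      (∀ x ∈ Set.Icc (0:ℝ) (ε ^ l), |γ x| ≤ ε) →
      d₁ < 0 → d₂ < 0 → d₃ < 0 → d₁ ^ 2 + d₂ ^ 2 + d₃ ^ 2 = 1 →
      1 ≤ s → s * ε ≤ 1 → ε ≤ s * ε ^ l → s * ε ^ l ≤ 1 →
      0 ≤ T₁ → T₂ ≤ T → T₂ - T₁ = ε ^ 2 →
      SmoothC1₃ w (tubeCyl ε l T₁ T₂ γ) →
      ParabolicC1₃ w (tubeCyl ε l T₁ T₂ γ) C₄ α₄ →
      (∀ x₁ ∈ Set.Icc (0:ℝ) ε, ∀ x₂ ∈ Set.Icc (0:ℝ) (ε ^ l), ∀ t ∈ Set.Icc T₁ T₂,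
        w x₁ x₂ (γ x₂) t = 0) →
      ‖(μ : ℂ) * ∫ t in T₁..T₂,
          ((∫ x₁ in (0:ℝ)..ε, ∫ x₃ in (γ (ε ^ l))..(γ (ε ^ l) + ε),
              (w x₁ (ε ^ l) x₃ t * qd2 (cgo3 μ lam s d₁ d₂ d₃) x₁ (ε ^ l) x₃ t
                - cgo3 μ lam s d₁ d₂ d₃ x₁ (ε ^ l) x₃ t * qd2 w x₁ (ε ^ l) x₃ t))
            - ∫ x₁ in (0:ℝ)..ε, ∫ x₃ in (0:ℝ)..ε,
              (w x₁ 0 x₃ t * qd2 (cgo3 μ lam s d₁ d₂ d₃) x₁ 0 x₃ t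
                - cgo3 μ lam s d₁ d₂ d₃ x₁ 0 x₃ t * qd2 w x₁ 0 x₃ t))‖
        ≤ C * (s ^ 2 * ε ^ (4 + l) + s ^ 2 * ε ^ (3 + l + (1 + α₄) * min l 1)
            + ε ^ (3 + α₄ * min l 1) + s ^ 3 * ε ^ (4 + 2 * l)
            + s * ε ^ (4 + α₄ * min l 1)) :=
  boundary_term_estimate_I1_3d_general μ lam T C₄ α₄ hμ hlam hC₄ hα₄
end
end
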